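/- arXiv:1804.00790 — 4 statements merged into one kernel-verified Lean document; each statement's English description precedes it below -/
import Mathlib

section
/- Let 2 ≤ k ≤ n, let U ∈ C^∞(ℝ^{n+2}), let α ∈ I(k,n), let i ∈ α+(n+1), and set β := α+(n+1)−i ∈ I(k,n+1). Then, identically on ℝ^{n+2}, ∂_{n+2} ( M_α^β(D²U) ) = ∑_{j ∈ α} ∂_j ( σ(α−j, j) M_{α−j+(n+2)}^β(D²U) ), where D²U is the (n+2)×(n+2) Hessian of U. -/
open MeasureTheory Filter Topology Finset

noncomputable section

/-- Euclidean `n`-space. -/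
abbrev Eu (n : ℕ) : Type := EuclideanSpace ℝ (Fin n)

/-- The partial derivative `∂ᵢ u`. -/
noncomputable def pd {n : ℕ} (i : Fin n) (u : Eu n → ℝ) : Eu n → ℝ :=
  fun x => fderiv ℝ u x (EuclideanSpace.single i 1)

/-- The second partial derivative `∂ᵢ∂ⱼ u`. -/
noncomputable def pd2 {n : ℕ} (i j : Fin n) (u : Eu n → ℝ) : Eu n → ℝ :=
  pd i (pd j u)

/-- The Hessian matrix `D²u` of `u`. -/
noncomputable def hess {n : ℕ} (u : Eu n → ℝ) (x : Eu n) : Matrix (Fin n) (Fin n) ℝ :=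
  Matrix.of fun i j => pd2 i j u x

/-- The minor `M_r^c(A)`: the determinant of the submatrix of `A` with rows `r` and
columns `c` (both taken in increasing order); `0` if the cardinalities differ. -/
noncomputable def minor {N : ℕ} (A : Matrix (Fin N) (Fin N) ℝ) (r c : Finset (Fin N)) : ℝ :=
  if h : c.card = r.card then
    (Matrix.of fun i j : Fin r.card =>
      A ((r.orderIsoOfFin rfl i : Fin N)) ((c.orderIsoOfFin h j : Fin N))).det
  else 0

/-- The `k`-Hessian `F_k[u] = ∑_{α ∈ I(k,n)} M_α^α(D²u)`. -/
noncomputable def fkH {n : ℕ} (k : ℕ) (u : Eu n → ℝ) (x : Eu n) : ℝ :=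
  ∑ s ∈ Finset.univ.filter (fun s : Finset (Fin n) => s.card = k), minor (hess u x) s s

/-- `σ(a,b)`: the sign of the permutation which reorders the concatenation of the
(increasingly ordered) disjoint multi-indices `a` and `b` into increasing order,
computed as `(-1)` to the number of inversions between `a` and `b`. -/
def interSign {N : ℕ} (a b : Finset (Fin N)) : ℤ :=
  (-1) ^ ((a ×ˢ b).filter fun p => p.2 < p.1).card

/-- The index `n+1` (i.e. the `(n+1)`-st coordinate) of `ℝ^{n+2}`. -/
def idx1 (n : ℕ) : Fin (n+2) := ⟨n, by omega⟩

/-- The index `n+2` (i.e. the `(n+2)`-nd coordinate) of `ℝ^{n+2}`. -/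
def idx2 (n : ℕ) : Fin (n+2) := ⟨n+1, by omega⟩

/-- A multi-index `α ∈ I(k,n)` viewed inside `I(k,n+2)`. -/
def extIdx (n : ℕ) (α : Finset (Fin n)) : Finset (Fin (n+2)) :=
  α.map (Fin.castLEEmb (Nat.le_add_right n 2))

lemma contDiff_pd {n : ℕ} (i : Fin n) {u : Eu n → ℝ} (hu : ContDiff ℝ (⊤ : ℕ∞) u) :
    ContDiff ℝ (⊤ : ℕ∞) (pd i u) := by
  have h1 : ContDiff ℝ (⊤ : ℕ∞) (fderiv ℝ u) := hu.fderiv_right (by simp)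
  exact (ContinuousLinearMap.apply ℝ ℝ (EuclideanSpace.single i 1)).contDiff.comp h1

lemma pd_swap {n : ℕ} (a b : Fin n) {u : Eu n → ℝ} (hu : ContDiff ℝ (⊤ : ℕ∞) u) (x : Eu n) :
    pd a (pd b u) x = pd b (pd a u) x := by
  have hdu : ContDiff ℝ (⊤ : ℕ∞) (fderiv ℝ u) := hu.fderiv_right (by simp)
  have key : ∀ c d : Fin n, pd c (pd d u) x
      = fderiv ℝ (fderiv ℝ u) x (EuclideanSpace.single c 1) (EuclideanSpace.single d 1) := by
    intro c d
    have : pd d u = fun y => (fderiv ℝ u y) (EuclideanSpace.single d 1) := rfl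
    rw [pd, this]
    rw [fderiv_clm_apply (hdu.differentiable (by simp) x) (differentiableAt_const _)]
    simp
  rw [key a b, key b a]
  exact second_derivative_symmetric (fun y => (hu.differentiable (by simp)).differentiableAt.hasFDerivAt.congr_fderiv rfl) ((hdu.differentiable (by simp) x).hasFDerivAt) _ _

lemma pd_sum {n : ℕ} (i : Fin n) {ι : Type*} (s : Finset ι) (f : ι → Eu n → ℝ) (x : Eu n)
    (hf : ∀ j ∈ s, DifferentiableAt ℝ (f j) x) :
    pd i (fun y => ∑ j ∈ s, f j y) x = ∑ j ∈ s, pd i (f j) x := by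
  unfold pd
  rw [fderiv_fun_sum hf]
  simp

lemma pd_const_mul {n : ℕ} (i : Fin n) (c : ℝ) (f : Eu n → ℝ) (x : Eu n)
    (hf : DifferentiableAt ℝ f x) :
    pd i (fun y => c * f y) x = c * pd i f x := by
  unfold pd
  rw [fderiv_const_mul hf]
  simp

lemma pd_prod {n : ℕ} (i : Fin n) {ι : Type*} [DecidableEq ι] (s : Finset ι)
    (f : ι → Eu n → ℝ) (x : Eu n) (hf : ∀ j ∈ s, DifferentiableAt ℝ (f j) x) :
    pd i (fun y => ∏ j ∈ s, f j y) x
      = ∑ j ∈ s, (∏ q ∈ s.erase j, f q x) * pd i (f j) x := by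
  have h := HasFDerivAt.finset_prod (u := s) (g := f)
    (g' := fun j => fderiv ℝ (f j) x) (x := x) (fun j hj => (hf j hj).hasFDerivAt)
  unfold pd
  rw [h.fderiv]
  simp [smul_eq_mul]

lemma pd_det_col {N k : ℕ} (i : Fin N) (M : Eu N → Matrix (Fin k) (Fin k) ℝ) (x : Eu N)
    (hM : ∀ p q, DifferentiableAt ℝ (fun y => M y p q) x) :
    pd i (fun y => (M y).det) x
      = ∑ c : Fin k, (Matrix.updateCol (M x) c (fun p => pd i (fun y => M y p c) x)).det := by
  have hprodd : ∀ σ : Equiv.Perm (Fin k),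
      DifferentiableAt ℝ (fun y => ∏ p : Fin k, M y (σ p) p) x := by
    intro σ
    exact (HasFDerivAt.finset_prod (u := Finset.univ)
      (g := fun p y => M y (σ p) p) (g' := fun p => fderiv ℝ (fun y => M y (σ p) p) x)
      (fun p _ => (hM (σ p) p).hasFDerivAt)).differentiableAt
  have hfun : (fun y => (M y).det)
      = fun y => ∑ σ : Equiv.Perm (Fin k), ((Equiv.Perm.sign σ : ℤ) : ℝ) * ∏ p, M y (σ p) p := by
    funext y
    simp [Matrix.det_apply, Units.smul_def, zsmul_eq_mul]
  rw [hfun, pd_sum i _ _ x (fun σ _ => (hprodd σ).const_mul _)]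
  have hterm : ∀ σ : Equiv.Perm (Fin k),
      pd i (fun y => ((Equiv.Perm.sign σ : ℤ) : ℝ) * ∏ p, M y (σ p) p) x
      = ((Equiv.Perm.sign σ : ℤ) : ℝ)
          * ∑ c : Fin k, (∏ q ∈ Finset.univ.erase c, M x (σ q) q)
              * pd i (fun y => M y (σ c) c) x := by
    intro σ
    rw [pd_const_mul i _ _ x (hprodd σ), pd_prod i _ _ x (fun p _ => hM (σ p) p)]
  simp only [hterm, Finset.mul_sum]
  rw [Finset.sum_comm]
  refine Finset.sum_congr rfl fun c _ => ?_
  rw [Matrix.det_apply]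
  refine Finset.sum_congr rfl fun σ _ => ?_
  rw [Units.smul_def, zsmul_eq_mul]
  congr 1
  rw [← Finset.mul_prod_erase Finset.univ _ (Finset.mem_univ c)]
  rw [Matrix.updateCol_apply, if_pos rfl, mul_comm]
  congr 1
  exact Finset.prod_congr rfl fun q hq => by
    rw [Matrix.updateCol_apply, if_neg (Finset.ne_of_mem_erase hq)]

open Matrix in
lemma pd_det {N k : ℕ} (i : Fin N) (M : Eu N → Matrix (Fin k) (Fin k) ℝ) (x : Eu N)
    (hM : ∀ p q, DifferentiableAt ℝ (fun y => M y p q) x) :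
    pd i (fun y => (M y).det) x
      = ∑ p : Fin k, (Matrix.updateRow (M x) p (fun q => pd i (fun y => M y p q) x)).det := by
  have h1 : (fun y => (M y).det) = fun y => ((M y)ᵀ).det := by
    funext y; rw [Matrix.det_transpose]
  rw [h1, pd_det_col i (fun y => (M y)ᵀ) x (fun p q => hM q p)]
  refine Finset.sum_congr rfl fun p _ => ?_
  rw [← Matrix.det_transpose]
  congr 1
  rw [← Matrix.updateRow_transpose, Matrix.transpose_transpose]
  rfl

lemma minor_eq_det {N k : ℕ} (A : Matrix (Fin N) (Fin N) ℝ) (r c : Finset (Fin N))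
    (hr : r.card = k) (hc : c.card = k) :
    minor A r c = (Matrix.of fun p q : Fin k =>
      A (r.orderEmbOfFin hr p) (c.orderEmbOfFin hc q)).det := by
  subst hr
  rw [minor, dif_pos hc]
  rfl

def cyclePerm {k : ℕ} (p₀ : Fin (k+1)) : Equiv.Perm (Fin (k+1)) :=
  Fin.revPerm.trans ((Fin.cycleRange p₀.rev).trans Fin.revPerm)

lemma cyclePerm_symm_val {k : ℕ} (p₀ : Fin (k+1)) (p : Fin (k+1)) :
    (((cyclePerm p₀).symm p : Fin (k+1)) : ℕ)
      = if (p : ℕ) = k then (p₀ : ℕ) else if (p : ℕ) < (p₀ : ℕ) then (p : ℕ) else (p : ℕ) + 1 := by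
  have hsymm : ∀ y : Fin (k+1), (cyclePerm p₀).symm y
      = Fin.rev ((Fin.cycleRange p₀.rev).symm (Fin.rev y)) := by
    intro y
    apply (cyclePerm p₀).injective
    simp [cyclePerm, Equiv.trans_apply, Fin.revPerm]
  rw [hsymm]
  rcases eq_or_ne (p : ℕ) k with hp | hp
  · rw [if_pos hp]
    have h0 : Fin.rev p = 0 := by
      ext; simp [Fin.val_rev, hp]
    rw [h0]
    have : (Fin.cycleRange p₀.rev).symm 0 = p₀.rev := by
      rw [Equiv.symm_apply_eq, Fin.cycleRange_self]
    rw [this, Fin.rev_rev]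
  · rw [if_neg hp]
    rcases lt_or_ge (p : ℕ) (p₀ : ℕ) with hlt | hge
    · rw [if_pos hlt]
      have hgt : p₀.rev < Fin.rev p := by
        rw [Fin.rev_lt_rev]; exact hlt
      have : (Fin.cycleRange p₀.rev).symm (Fin.rev p) = Fin.rev p := by
        rw [Equiv.symm_apply_eq, Fin.cycleRange_of_gt hgt]
      rw [this, Fin.rev_rev]
    · rw [if_neg (not_lt.mpr hge)]
      have hpk : (p : ℕ) < k := lt_of_le_of_ne (Nat.lt_succ_iff.mp p.isLt) hp
      set z : Fin (k+1) := ⟨k - (p : ℕ) - 1, by omega⟩ with hz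
      have hzle : z ≤ p₀.rev := by
        rw [Fin.le_def, Fin.val_rev]
        simp only [hz]
        omega
      have hzlast : z < Fin.last k := by
        rw [Fin.lt_def]
        simp only [hz, Fin.val_last]
        omega
      have hzval : (Fin.cycleRange p₀.rev) z = Fin.rev p := by
        rw [Fin.cycleRange_of_le hzle, if_neg]
        · ext
          rw [Fin.val_add_one_of_lt hzlast]
          simp only [hz, Fin.val_rev]
          omega
        · intro h
          rw [Fin.ext_iff, Fin.val_rev] at h
          simp only [hz] at h
          omega
      have : (Fin.cycleRange p₀.rev).symm (Fin.rev p) = z := by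
        rw [Equiv.symm_apply_eq, hzval]
      rw [this, Fin.val_rev]
      simp only [hz]
      omega

lemma cyclePerm_sign {k : ℕ} (p₀ : Fin (k+1)) :
    Equiv.Perm.sign (cyclePerm p₀) = (-1) ^ (k - (p₀ : ℕ)) := by
  have hmul : cyclePerm p₀ = Fin.revPerm * Fin.cycleRange p₀.rev * Fin.revPerm := by
    ext x
    simp [cyclePerm, Equiv.trans_apply, Equiv.Perm.mul_apply, Fin.revPerm]
  rw [hmul, map_mul, map_mul, Fin.sign_cycleRange]
  have hval : ((p₀.rev : Fin (k+1)) : ℕ) = k - (p₀ : ℕ) := by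
    rw [Fin.val_rev]; omega
  rw [hval]
  rcases Int.units_eq_one_or (Equiv.Perm.sign (Fin.revPerm : Equiv.Perm (Fin (k+1)))) with h | h <;>
    rw [h]
  · rw [one_mul, mul_one]
  · rw [mul_comm, ← mul_assoc]
    norm_num

lemma minor_update {N : ℕ} (A : Matrix (Fin N) (Fin N) ℝ) (r : Finset (Fin N))
    (j m : Fin N) (hj : j ∈ r) (hm : ∀ a ∈ r, a < m) (c : Finset (Fin N))
    (hc : c.card = r.card) :
    minor A (r.erase j ∪ {m}) c
      = ((interSign (r.erase j) {j} : ℤ) : ℝ) * minor (A.updateRow j (A m)) r c := by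
  obtain ⟨k, hk⟩ : ∃ k, r.card = k + 1 :=
    ⟨r.card - 1, by have := Finset.card_pos.mpr ⟨j, hj⟩; omega⟩
  have hmr : m ∉ r := fun h => lt_irrefl m (hm m h)
  have hdisj : Disjoint (r.erase j) ({m} : Finset (Fin N)) := by
    simp only [Finset.disjoint_singleton_right, Finset.mem_erase]
    exact fun h => hmr h.2
  have hr' : (r.erase j ∪ {m}).card = k + 1 := by
    rw [Finset.card_union_of_disjoint hdisj, Finset.card_erase_of_mem hj,
      Finset.card_singleton, hk]
    omega
  have hck : c.card = k + 1 := hc.trans hk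
  set e := r.orderEmbOfFin hk with he
  set cemb := c.orderEmbOfFin hck with hcemb
  set p₀ : Fin (k+1) := (r.orderIsoOfFin hk).symm ⟨j, hj⟩ with hp₀def
  have hp₀ : e p₀ = j := by
    rw [he, ← Finset.coe_orderIsoOfFin_apply, hp₀def, OrderIso.apply_symm_apply]
  have hpe : ∀ p : Fin (k+1), e p = j → p = p₀ := by
    intro p hp
    have : e p = e p₀ := by rw [hp, hp₀]
    exact e.injective this
  set g : Fin (k+1) → Fin N := fun p => if p = p₀ then m else e p with hg
  set π := cyclePerm p₀ with hπ
  set f : Fin (k+1) → Fin N := fun p => g (π.symm p) with hf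
  -- basic facts about π.symm
  have hsymm_ne : ∀ p : Fin (k+1), (p : ℕ) ≠ k →
      π.symm p ≠ p₀ ∧ ((π.symm p : ℕ) = if (p : ℕ) < (p₀ : ℕ) then (p : ℕ) else (p : ℕ) + 1) := by
    intro p hp
    have hv := cyclePerm_symm_val p₀ p
    rw [if_neg hp] at hv
    constructor
    · intro hcon
      rw [hcon] at hv
      split at hv <;> omega
    · exact hv
  have hsymm_last : ∀ p : Fin (k+1), (p : ℕ) = k → π.symm p = p₀ := by
    intro p hp
    have hv := cyclePerm_symm_val p₀ p
    rw [if_pos hp] at hv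
    exact Fin.ext hv
  -- f is strictly monotone with image r'
  have hfmem : ∀ p : Fin (k+1), f p ∈ r.erase j ∪ {m} := by
    intro p
    simp only [hf, hg]
    split
    · exact Finset.mem_union_right _ (Finset.mem_singleton_self m)
    · rename_i hne
      refine Finset.mem_union_left _ (Finset.mem_erase.mpr ⟨?_, Finset.orderEmbOfFin_mem r hk _⟩)
      intro hcon
      exact hne (hpe _ hcon)
  have hfval : ∀ p : Fin (k+1), (p : ℕ) ≠ k → f p = e (π.symm p) := by
    intro p hp
    simp only [hf, hg, if_neg (hsymm_ne p hp).1]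
  have hfmono : StrictMono f := by
    intro p q hpq
    have hpk : (p : ℕ) ≠ k := by
      have := q.isLt
      have := Fin.lt_def.mp hpq
      omega
    rcases eq_or_ne (q : ℕ) k with hq | hq
    · have hfq : f q = m := by
        have h5 := hsymm_last q hq
        simp [hf, hg, h5]
      rw [hfq, hfval p hpk]
      exact hm _ (Finset.orderEmbOfFin_mem r hk _)
    · rw [hfval p hpk, hfval q hq]
      apply e.strictMono
      have h1 := (hsymm_ne p hpk).2
      have h2 := (hsymm_ne q hq).2
      rw [Fin.lt_def]
      have := Fin.lt_def.mp hpq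
      split at h1 <;> split at h2 <;> omega
  have hfeq : f = ⇑((r.erase j ∪ {m}).orderEmbOfFin hr') :=
    Finset.orderEmbOfFin_unique hr' hfmem hfmono
  -- rewrite the two minors
  rw [minor_eq_det A _ c hr' hck, minor_eq_det (A.updateRow j (A m)) r c hk hck]
  have hmat2 : (Matrix.of fun p q : Fin (k+1) =>
      (A.updateRow j (A m)) (r.orderEmbOfFin hk p) (cemb q))
      = Matrix.of fun p q : Fin (k+1) => A (g p) (cemb q) := by
    ext p q
    simp only [Matrix.of_apply, hg]
    split
    · rename_i hpp
      rw [hpp, ← he, hp₀, Matrix.updateRow_self]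
    · rename_i hpp
      rw [Matrix.updateRow_ne (fun hcon => hpp (hpe _ hcon))]
  have hmat1 : (Matrix.of fun p q : Fin (k+1) =>
      A ((r.erase j ∪ {m}).orderEmbOfFin hr' p) (cemb q))
      = Matrix.of fun p q : Fin (k+1) => A (f p) (cemb q) := by
    ext p q
    rw [hfeq]
  rw [hmat1, hmat2]
  -- determinant identity via permutation
  have hsub : (Matrix.of fun p q : Fin (k+1) => A (g p) (cemb q))
      = (Matrix.of fun p q : Fin (k+1) => A (f p) (cemb q)).submatrix π id := by
    ext p q
    simp only [Matrix.submatrix_apply, Matrix.of_apply, id, hf, Equiv.symm_apply_apply]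
  rw [hsub, Matrix.det_permute, cyclePerm_sign]
  -- count inversions for interSign
  have hcount : (((r.erase j) ×ˢ ({j} : Finset (Fin N))).filter fun p => p.2 < p.1).card
      = k - (p₀ : ℕ) := by
    have h1 : (((r.erase j) ×ˢ ({j} : Finset (Fin N))).filter fun p => p.2 < p.1)
        = (r.filter fun a => j < a).map ⟨fun a => (a, j), fun a b hab => (Prod.mk.injEq _ _ _ _ ▸ hab).1⟩ := by
      ext ⟨a, b⟩
      simp only [Finset.mem_filter, Finset.mem_product, Finset.mem_erase,
        Finset.mem_singleton, Finset.mem_map, Function.Embedding.coeFn_mk, Prod.mk.injEq]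
      constructor
      · rintro ⟨⟨⟨hne, har⟩, hbj⟩, hlt⟩
        exact ⟨a, ⟨har, hbj ▸ hlt⟩, show (a, j) = (a, b) by rw [hbj]⟩
      · rintro ⟨a', ⟨har, hlt⟩, h⟩
        have h' : (a', j) = (a, b) := h
        obtain ⟨rfl, rfl⟩ := Prod.mk.inj h'
        exact ⟨⟨⟨ne_of_gt hlt, har⟩, rfl⟩, hlt⟩
    rw [h1, Finset.card_map]
    have h2 : (r.filter fun a => j < a).card = (Finset.Ioi p₀).card := by
      refine Finset.card_bij'
        (fun a ha => (r.orderIsoOfFin hk).symm ⟨a, (Finset.mem_filter.mp ha).1⟩)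
        (fun p _ => e p) ?_ ?_ ?_ ?_
      · intro a ha
        obtain ⟨har, hlt⟩ := Finset.mem_filter.mp ha
        rw [Finset.mem_Ioi]
        have h3 : e p₀ < e ((r.orderIsoOfFin hk).symm ⟨a, har⟩) := by
          rw [hp₀, he, ← Finset.coe_orderIsoOfFin_apply, OrderIso.apply_symm_apply]
          exact hlt
        exact e.strictMono.lt_iff_lt.mp h3
      · intro p hp
        rw [Finset.mem_Ioi] at hp
        refine Finset.mem_filter.mpr ⟨Finset.orderEmbOfFin_mem r hk p, ?_⟩
        rw [← hp₀]
        exact e.strictMono hp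
      · intro a ha
        have h4 : (((r.orderIsoOfFin hk)
            ((r.orderIsoOfFin hk).symm ⟨a, (Finset.mem_filter.mp ha).1⟩) : r) : Fin N) = a := by
          rw [OrderIso.apply_symm_apply]
        rw [Finset.coe_orderIsoOfFin_apply] at h4
        exact h4
      · intro p hp
        exact (OrderIso.symm_apply_eq _).mpr
          (Subtype.ext (Finset.coe_orderIsoOfFin_apply r hk p).symm)
    rw [h2, Fin.card_Ioi]
    omega
  rw [interSign, hcount]
  push_cast
  rw [← mul_assoc, ← mul_pow]
  norm_num

lemma sum_erase_antisymm {k : ℕ} (h : Fin k → Fin k → ℝ)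
    (hh : ∀ p q, p ≠ q → h p q = - h q p) :
    ∑ p₁ : Fin k, ∑ p ∈ Finset.univ.erase p₁, h p₁ p = 0 := by
  have h1 : ∀ p₁ : Fin k, ∑ p ∈ Finset.univ.erase p₁, h p₁ p
      = ∑ p : Fin k, if p ≠ p₁ then h p₁ p else 0 := by
    intro p₁
    rw [← Finset.filter_ne' Finset.univ p₁, Finset.sum_filter]
  simp only [h1]
  rw [← Finset.sum_product' Finset.univ Finset.univ (fun p₁ p => if p ≠ p₁ then h p₁ p else 0)]
  apply Finset.sum_ninvolution Prod.swap
  · intro z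
    rcases eq_or_ne z.2 z.1 with hz | hz
    · simp [hz]
    · simp only [Prod.snd_swap, Prod.fst_swap, if_pos hz, if_pos hz.symm]
      rw [hh z.1 z.2 hz.symm]
      ring
  · intro z hz
    intro hcon
    have : z.2 = z.1 := congrArg Prod.fst hcon
    simp [this] at hz
  · intro z; exact Finset.mem_product.mpr ⟨Finset.mem_univ _, Finset.mem_univ _⟩
  · intro z; simp

theorem main_aux {N : ℕ} (U : Eu N → ℝ) (hU : ContDiff ℝ (⊤ : ℕ∞) U) {k : ℕ}
    (A β : Finset (Fin N)) (hA : A.card = k) (hβk : β.card = k)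
    (m : Fin N) (hm : ∀ a ∈ A, a < m) (x : Eu N) :
    pd m (fun y => minor (hess U y) A β) x
      = ∑ j ∈ A, pd j (fun y => ((interSign (A.erase j) {j} : ℤ) : ℝ)
          * minor (hess U y) (A.erase j ∪ {m}) β) x := by
  classical
  have hsm : ∀ a b : Fin N, ContDiff ℝ (⊤ : ℕ∞) (pd2 a b U) :=
    fun a b => contDiff_pd a (contDiff_pd b hU)
  have hdiffable : ∀ (a b : Fin N) (y : Eu N), DifferentiableAt ℝ (pd2 a b U) y :=
    fun a b y => ((hsm a b).differentiable (by simp)).differentiableAt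
  have hswap : ∀ (a b c : Fin N) (y : Eu N), pd a (pd2 b c U) y = pd b (pd2 a c U) y :=
    fun a b c y => pd_swap a b (contDiff_pd c hU) y
  set e := A.orderEmbOfFin hA with he
  set cb := β.orderEmbOfFin hβk with hcb
  set G : Fin k → Eu N → Matrix (Fin k) (Fin k) ℝ := fun p₁ y =>
    Matrix.of fun p q => if p = p₁ then pd2 m (cb q) U y else pd2 (e p) (cb q) U y with hG
  set D : Fin k → Fin k → ℝ := fun p₁ p =>
    (Matrix.updateRow (G p₁ x) p (fun q =>
      if p = p₁ then pd (e p₁) (pd2 m (cb q) U) x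
      else pd (e p₁) (pd2 (e p) (cb q) U) x)).det with hD
  have hGdiff : ∀ p₁ p q, DifferentiableAt ℝ (fun y => G p₁ y p q) x := by
    intro p₁ p q
    rcases eq_or_ne p p₁ with rfl | hp
    · simpa only [hG, Matrix.of_apply, if_pos rfl, if_true] using hdiffable m (cb q) x
    · simpa only [hG, Matrix.of_apply, if_neg hp] using hdiffable (e p) (cb q) x
  -- rewrite the LHS
  have hLfun : (fun y => minor (hess U y) A β)
      = fun y => (Matrix.of fun p q : Fin k => pd2 (e p) (cb q) U y).det := by
    funext y
    rw [minor_eq_det (hess U y) A β hA hβk]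
    rfl
  rw [hLfun, pd_det m (fun y => Matrix.of fun p q : Fin k => pd2 (e p) (cb q) U y) x
    (fun p q => hdiffable (e p) (cb q) x)]
  -- reindex the RHS
  have hAimg : A = Finset.image (⇑e) Finset.univ := by
    ext a
    simp only [Finset.mem_image, Finset.mem_univ, true_and]
    constructor
    · intro ha
      refine ⟨(A.orderIsoOfFin hA).symm ⟨a, ha⟩, ?_⟩
      rw [he, ← Finset.coe_orderIsoOfFin_apply, OrderIso.apply_symm_apply]
    · rintro ⟨p, rfl⟩
      exact Finset.orderEmbOfFin_mem A hA p
  conv_rhs => rw [hAimg]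
  rw [Finset.sum_image (fun p _ q _ h => e.injective h), ← hAimg]
  -- rewrite each RHS summand
  have hσ2 : ∀ s t : Finset (Fin N),
      ((interSign s t : ℤ) : ℝ) * ((interSign s t : ℤ) : ℝ) = 1 := by
    intro s t
    rw [interSign]
    push_cast
    rw [← pow_add]
    exact Even.neg_one_pow ⟨_, rfl⟩
  have hstep : ∀ p₁ : Fin k,
      pd (e p₁) (fun y => ((interSign (A.erase (e p₁)) {e p₁} : ℤ) : ℝ)
        * minor (hess U y) (A.erase (e p₁) ∪ {m}) β) x = ∑ p : Fin k, D p₁ p := by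
    intro p₁
    have hfun2 : (fun y => ((interSign (A.erase (e p₁)) {e p₁} : ℤ) : ℝ)
        * minor (hess U y) (A.erase (e p₁) ∪ {m}) β) = fun y => (G p₁ y).det := by
      funext y
      rw [minor_update (hess U y) A (e p₁) m (Finset.orderEmbOfFin_mem A hA p₁) hm β
        (hβk.trans hA.symm), ← mul_assoc, hσ2, one_mul,
        minor_eq_det _ A β hA hβk]
      congr 1
      ext p q
      simp only [hG, Matrix.of_apply]
      rw [Matrix.updateRow_apply]
      rcases eq_or_ne p p₁ with rfl | hp
      · rw [if_pos rfl, if_pos rfl]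
        rfl
      · rw [if_neg (fun hcon => hp (e.injective hcon)), if_neg hp]
        rfl
    rw [hfun2, pd_det (e p₁) (G p₁) x (hGdiff p₁)]
    refine Finset.sum_congr rfl fun p _ => ?_
    rw [hD]
    congr 1
    funext q
    rcases eq_or_ne p p₁ with rfl | hp
    · simp only [hG, Matrix.of_apply, if_pos rfl]
      rfl
    · simp only [hG, Matrix.of_apply, if_neg hp]
  rw [Finset.sum_congr rfl fun p₁ _ => hstep p₁]
  -- split into diagonal and off-diagonal parts
  rw [Finset.sum_congr rfl fun p₁ _ =>
    (Finset.add_sum_erase Finset.univ (D p₁) (Finset.mem_univ p₁)).symm,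
    Finset.sum_add_distrib]
  -- off-diagonal part vanishes
  have hanti : ∀ a b : Fin k, a ≠ b → D a b = - D b a := by
    intro a b hab
    have hM12 : (Matrix.updateRow (G a x) b (fun q =>
        if b = a then pd (e a) (pd2 m (cb q) U) x else pd (e a) (pd2 (e b) (cb q) U) x))
        = (Matrix.updateRow (G b x) a (fun q =>
          if a = b then pd (e b) (pd2 m (cb q) U) x
          else pd (e b) (pd2 (e a) (cb q) U) x)).submatrix (Equiv.swap a b) id := by
      ext r q
      simp only [Matrix.submatrix_apply, id_eq, Matrix.updateRow_apply, hG, Matrix.of_apply]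
      rcases eq_or_ne r b with rfl | hrb
      · rw [if_pos rfl, if_neg (Ne.symm hab), Equiv.swap_apply_right, if_pos rfl,
          if_neg hab]
        exact hswap (e a) (e r) (cb q) x
      · rw [if_neg hrb]
        rcases eq_or_ne r a with rfl | hra
        · rw [if_pos rfl, Equiv.swap_apply_left, if_neg (Ne.symm hab), if_pos rfl]
        · rw [if_neg hra, Equiv.swap_apply_of_ne_of_ne hra hrb, if_neg hra, if_neg hrb]
    rw [hD]
    simp only
    rw [hM12, Matrix.det_permute, Equiv.Perm.sign_swap hab]
    simp
  rw [sum_erase_antisymm D hanti, add_zero]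
  -- diagonal part matches the LHS
  refine Finset.sum_congr rfl fun p₁ _ => ?_
  rw [hD]
  congr 1
  ext r q
  rw [Matrix.updateRow_apply, Matrix.updateRow_apply]
  rcases eq_or_ne r p₁ with rfl | hr
  · rw [if_pos rfl, if_pos rfl, if_pos rfl]
    exact hswap m (e r) (cb q) x
  · rw [if_neg hr, if_neg hr]
    simp only [hG, Matrix.of_apply, if_neg hr]

theorem stmt6 (n k : ℕ) (hk : 2 ≤ k) (hkn : k ≤ n)
    (U : Eu (n+2) → ℝ) (hU : ContDiff ℝ (⊤ : ℕ∞) U)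
    (α : Finset (Fin n)) (hα : α.card = k)
    (i : Fin (n+2)) (hi : i ∈ extIdx n α ∪ {idx1 n})
    (β : Finset (Fin (n+2))) (hβ : β = (extIdx n α ∪ {idx1 n}).erase i) :
    ∀ x : Eu (n+2),
      pd (idx2 n) (fun y => minor (hess U y) (extIdx n α) β) x =
        ∑ j ∈ extIdx n α, pd j (fun y =>
          ((interSign ((extIdx n α).erase j) {j} : ℤ) : ℝ)
            * minor (hess U y) ((extIdx n α).erase j ∪ {idx2 n}) β) x := by

  have hA : (extIdx n α).card = k := by
    rw [extIdx, Finset.card_map, hα]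
  have hidx1 : idx1 n ∉ extIdx n α := by
    intro hmem
    rw [extIdx, Finset.mem_map] at hmem
    obtain ⟨b, _, hb⟩ := hmem
    have hv : (b : ℕ) = n := by
      have h2 := congrArg Fin.val hb
      simpa [idx1, Fin.castLEEmb, Fin.castLE] using h2
    have := b.isLt
    omega
  have hβk : β.card = k := by
    rw [hβ, Finset.card_erase_of_mem hi, Finset.card_union_of_disjoint
      (Finset.disjoint_singleton_right.mpr hidx1), hA, Finset.card_singleton]
    omega
  have hm : ∀ a ∈ extIdx n α, a < idx2 n := by
    intro a ha
    rw [extIdx, Finset.mem_map] at ha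
    obtain ⟨b, _, hb⟩ := ha
    have hval : (a : ℕ) = (b : ℕ) := by
      have h2 := congrArg Fin.val hb
      simpa [Fin.castLEEmb, Fin.castLE] using h2.symm
    have := b.isLt
    rw [Fin.lt_def]
    simp only [idx2, hval]
    omega
  exact fun x => main_aux U hU (extIdx n α) β hA hβk (idx2 n) hm x

end
end

section
/- Let n ≥ 2 and 2 ≤ k ≤ n. Let h ∈ C_c^∞((0,1)) and define g(x) = ∫_0^{|x|} h(r) dr for x ∈ ℝⁿ (so g is smooth on ℝⁿ). Then for every α ∈ I(k,n), ∫_{B(0,1)} M_α^α(D²g(x)) |x|² dx = −(2/n) · 2π · ( ∏_{i=1}^{n−2} ∫_0^π sin^i θ dθ ) · ∫_0^1 h^k(r) r^{−k+n+1} dr. -/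
open MeasureTheory Filter Topology Finset

noncomputable section

/-! ### Auxiliary lemmas -/

section Aux

open Real Matrix

lemma sinint' (m : ℕ) : ∫ x in (0:ℝ)..π, Real.sin x ^ m
    = Real.sqrt π * Real.Gamma (((m:ℝ)+1)/2) / Real.Gamma ((m:ℝ)/2 + 1) := by
  induction m using Nat.strong_induction_on with
  | _ m ih =>
    match m with
    | 0 =>
      have : (((0:ℕ):ℝ)+1)/2 = 1/2 := by norm_num
      rw [this, Real.Gamma_one_half_eq]
      have : ((0:ℕ):ℝ)/2 + 1 = 1 := by norm_num
      rw [this, Real.Gamma_one, div_one, Real.mul_self_sqrt pi_pos.le]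
      simp
    | 1 =>
      have e1 : (((1:ℕ):ℝ)+1)/2 = 1 := by norm_num
      have e2 : ((1:ℕ):ℝ)/2 + 1 = 1/2 + 1 := by norm_num
      rw [e1, e2, Real.Gamma_one, Real.Gamma_add_one (by norm_num), Real.Gamma_one_half_eq]
      have : (∫ x in (0:ℝ)..π, Real.sin x ^ 1) = 2 := by
        norm_num
      rw [this, eq_div_iff (by positivity)]
      rw [show (1:ℝ)/2 * Real.sqrt π = Real.sqrt π / 2 by ring]
      ring
    | (m+2) =>
      have h1 : (∫ x in (0:ℝ)..π, Real.sin x ^ (m+2))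
          = ((m:ℝ)+1)/((m:ℝ)+2) * ∫ x in (0:ℝ)..π, Real.sin x ^ m := by
        have := integral_sin_pow (a := 0) (b := π) m
        simpa using this
      rw [h1, ih m (by omega)]
      have e1 : (((m+2:ℕ):ℝ)+1)/2 = ((m:ℝ)+1)/2 + 1 := by push_cast; ring
      have e2 : ((m+2:ℕ):ℝ)/2 + 1 = ((m:ℝ)/2 + 1) + 1 := by push_cast; ring
      have hg1 : Real.Gamma (((m:ℝ)+1)/2 + 1) = (((m:ℝ)+1)/2) * Real.Gamma (((m:ℝ)+1)/2) :=
        Real.Gamma_add_one (by positivity)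
      have hg2 : Real.Gamma (((m:ℝ)/2 + 1) + 1) = ((m:ℝ)/2 + 1) * Real.Gamma ((m:ℝ)/2 + 1) :=
        Real.Gamma_add_one (by positivity)
      rw [e1, e2, hg1, hg2]
      have g1 : Real.Gamma ((m:ℝ)/2+1) ≠ 0 := (Real.Gamma_pos_of_pos (by positivity)).ne'
      have g2 : ((m:ℝ)+2) ≠ 0 := by positivity
      field_simp

lemma sinprod' (m : ℕ) :
    (∏ i ∈ Finset.Icc 1 m, ∫ x in (0:ℝ)..π, Real.sin x ^ i)
      = Real.sqrt π ^ m / Real.Gamma ((m:ℝ)/2 + 1) := by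
  induction m with
  | zero => simp [Real.Gamma_one]
  | succ m ih =>
    rw [Finset.prod_Icc_succ_top (by omega), ih, sinint']
    have e1 : (((m+1:ℕ)):ℝ) = (m:ℝ)+1 := by push_cast; ring
    rw [e1]
    have e2 : ((m:ℝ)+1+1)/2 = (m:ℝ)/2 + 1 := by ring
    rw [e2]
    have g1 : Real.Gamma ((m:ℝ)/2+1) ≠ 0 := (Real.Gamma_pos_of_pos (by positivity)).ne'
    have g2 : Real.Gamma (((m:ℝ)+1)/2+1) ≠ 0 := (Real.Gamma_pos_of_pos (by positivity)).ne'
    field_simp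
    ring

lemma det_aux' {ι : Type*} [Fintype ι] [DecidableEq ι] (hc : 2 ≤ Fintype.card ι)
    (a b : ℝ) (v : ι → ℝ) :
    (Matrix.of fun p q => a * (if p = q then (1:ℝ) else 0) + b * v p * v q).det
      = a ^ (Fintype.card ι - 1) * (a + b * ∑ p, v p ^ 2) := by
  rcases eq_or_ne a 0 with rfl | ha
  · simp only [zero_mul, zero_add]
    rw [zero_pow (by omega), zero_mul]
    have e : (Matrix.of fun p q => b * v p * v q)
        = Matrix.of fun p q => (b * v p) * ((fun _ _ => (1:ℝ)) p q * v q) := by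
      ext p q; simp
    rw [e]
    have h1 : (Matrix.of fun p q => (b * v p) * ((fun (_ _ : ι) => (1:ℝ)) p q * v q)).det
        = (∏ p, (b * v p)) * (Matrix.of fun p q => (fun (_ _ : ι) => (1:ℝ)) p q * v q).det := by
      exact Matrix.det_mul_column (fun p => b * v p) _
    rw [h1]
    have h2 : (Matrix.of fun p q => (fun (_ _ : ι) => (1:ℝ)) p q * v q).det
        = (Matrix.of fun p q => v q * (fun (_ _ : ι) => (1:ℝ)) p q).det := by
      congr 1; ext p q
      simp only [Matrix.of_apply]
      exact (one_mul _).trans (mul_one _).symm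
    have h3 : (Matrix.of fun p q => v q * (fun (_ _ : ι) => (1:ℝ)) p q).det
        = (∏ p, v p) * (Matrix.of fun (_ _ : ι) => (1:ℝ)).det :=
      Matrix.det_mul_row v (Matrix.of fun _ _ => (1:ℝ))
    rw [h2, h3]
    obtain ⟨p, q, hpq⟩ := Fintype.exists_pair_of_one_lt_card (α := ι) (by omega)
    rw [Matrix.det_zero_of_row_eq (M := Matrix.of fun (_ _ : ι) => (1:ℝ)) hpq (by ext j; rfl)]
    ring
  · have e : (Matrix.of fun p q => a * (if p = q then (1:ℝ) else 0) + b * v p * v q)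
        = a • ((1 : Matrix ι ι ℝ) + Matrix.replicateCol (Fin 1) ((b/a) • v) * Matrix.replicateRow (Fin 1) v) := by
      ext p q
      simp [Matrix.one_apply, Matrix.mul_apply, Matrix.smul_apply]
      rcases eq_or_ne p q with rfl | hpq
      · simp; field_simp
      · simp [hpq]; field_simp
    rw [e, Matrix.det_smul]
    erw [Matrix.det_one_add_replicateCol_mul_replicateRow (ι := Fin 1)]
    have : v ⬝ᵥ (b / a) • v = (b/a) * ∑ p, v p ^ 2 := by
      simp [dotProduct, Finset.mul_sum]
      congr 1; ext p; ring
    rw [this]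
    have hcard : a ^ Fintype.card ι = a ^ (Fintype.card ι - 1) * a := by
      rw [← pow_succ]; congr 1; omega
    rw [hcard]
    field_simp

lemma minor_eq' {n : ℕ} (A : Matrix (Fin n) (Fin n) ℝ) (α : Finset (Fin n)) {k : ℕ}
    (hα : α.card = k) (hk : 2 ≤ k) (a b : ℝ) (v : Fin n → ℝ)
    (hA : ∀ i j, i ∈ α → j ∈ α → A i j = a * (if i = j then 1 else 0) + b * v i * v j) :
    minor A α α = a^(k-1) * (a + b * ∑ i ∈ α, v i ^2) := by
  rw [minor, dif_pos rfl]
  have card2 : 2 ≤ Fintype.card (Fin α.card) := by simp [hα, hk]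
  have key := det_aux' card2 a b (fun p : Fin α.card => v (α.orderIsoOfFin rfl p))
  have e : (Matrix.of fun i j : Fin α.card =>
        A ((α.orderIsoOfFin rfl i : Fin n)) ((α.orderIsoOfFin rfl j : Fin n)))
      = (Matrix.of fun p q : Fin α.card =>
        a * (if p = q then (1:ℝ) else 0)
          + b * v (α.orderIsoOfFin rfl p) * v (α.orderIsoOfFin rfl q)) := by
    ext p q
    simp only [Matrix.of_apply]
    rw [hA _ _ (α.orderIsoOfFin rfl p).2 (α.orderIsoOfFin rfl q).2]
    congr 1
    congr 1
    by_cases hpq : p = q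
    · subst hpq; simp
    · have : ((α.orderIsoOfFin rfl p : Fin n)) ≠ ((α.orderIsoOfFin rfl q : Fin n)) := by
        intro hcon
        exact hpq ((α.orderIsoOfFin rfl).injective (Subtype.coe_injective hcon))
      simp [hpq, this]
  rw [e, key]
  have hsum : ∑ p : Fin α.card, v (α.orderIsoOfFin rfl p) ^ 2 = ∑ i ∈ α, v i ^ 2 := by
    rw [← Finset.sum_coe_sort α (fun i => v i ^ 2)]
    exact Equiv.sum_comp (α.orderIsoOfFin rfl).toEquiv (fun a : {x // x ∈ α} => v a ^ 2)
  rw [hsum]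
  simp [hα]

lemma hasFDerivAt_norm' {n : ℕ} {x : Eu n} (hx : x ≠ 0) :
    HasFDerivAt (fun y : Eu n => ‖y‖) (‖x‖⁻¹ • innerSL ℝ x) x := by
  have h1 : HasFDerivAt (fun y : Eu n => ‖y‖ ^ 2) (2 • innerSL ℝ x) x :=
    (hasStrictFDerivAt_norm_sq x).hasFDerivAt
  have h2 : HasDerivAt Real.sqrt (1 / (2 * Real.sqrt (‖x‖^2))) (‖x‖^2) :=
    Real.hasDerivAt_sqrt (pow_ne_zero 2 (norm_ne_zero_iff.2 hx))
  have h3 := h2.comp_hasFDerivAt x h1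
  have e : (Real.sqrt ∘ fun y : Eu n => ‖y‖ ^ 2) = fun y : Eu n => ‖y‖ := by
    funext y; simp [Function.comp, Real.sqrt_sq (norm_nonneg y)]
  rw [show (Real.sqrt ∘ fun y : Eu n => ‖y‖ ^ 2) = fun y : Eu n => ‖y‖ from e] at h3
  refine h3.congr_fderiv ?_
  rw [Real.sqrt_sq (norm_nonneg x)]
  ext y
  simp [smul_smul]
  ring

lemma radial_hasFDerivAt {n : ℕ} {f : ℝ → ℝ} {f' : ℝ} {x : Eu n} (hx : x ≠ 0)
    (hf : HasDerivAt f f' ‖x‖) :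
    HasFDerivAt (fun y : Eu n => f ‖y‖) ((f' * ‖x‖⁻¹) • innerSL ℝ x) x := by
  have h3 := hf.comp_hasFDerivAt x (hasFDerivAt_norm' hx)
  refine h3.congr_fderiv ?_
  rw [smul_smul]

lemma inner_single' {n : ℕ} (x : Eu n) (j : Fin n) :
    (innerSL ℝ x) (EuclideanSpace.single j (1:ℝ)) = x j := by
  simp [EuclideanSpace.inner_single_right]

lemma pd_radial {n : ℕ} {f : ℝ → ℝ} {f' : ℝ} {x : Eu n} (hx : x ≠ 0)
    (hf : HasDerivAt f f' ‖x‖) (j : Fin n) :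
    pd j (fun y : Eu n => f ‖y‖) x = f' * (x j) / ‖x‖ := by
  rw [pd, (radial_hasFDerivAt hx hf).fderiv]
  simp [inner_single']
  ring

section main
variable {n : ℕ} (h : ℝ → ℝ) (hsm : ContDiff ℝ (⊤ : ℕ∞) h) (g : Eu n → ℝ)
  (hg : ∀ x : Eu n, g x = ∫ r in (0:ℝ)..‖x‖, h r)

include hsm hg

omit hg in
lemma hderiv (t : ℝ) : HasDerivAt (fun s => ∫ r in (0:ℝ)..s, h r) (h t) t :=
  intervalIntegral.integral_hasDerivAt_right (hsm.continuous.intervalIntegrable 0 t)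
    (hsm.continuous.stronglyMeasurableAtFilter _ _) hsm.continuous.continuousAt

lemma pd_g {x : Eu n} (hx : x ≠ 0) (j : Fin n) :
    pd j g x = h ‖x‖ * (x j) / ‖x‖ := by
  have hge : g = fun y : Eu n => (fun s => ∫ r in (0:ℝ)..s, h r) ‖y‖ := funext hg
  rw [hge]
  exact pd_radial hx (hderiv h hsm ‖x‖) j

lemma pd2_g {x : Eu n} (hx : x ≠ 0) (i j : Fin n) :
    pd2 i j g x = (h ‖x‖ / ‖x‖) * (if i = j then 1 else 0)
      + ((deriv h ‖x‖ * ‖x‖ - h ‖x‖) / ‖x‖^3) * (x i * x j) := by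
  have hx' : ‖x‖ ≠ 0 := norm_ne_zero_iff.2 hx
  set ψ : ℝ → ℝ := fun t => h t / t with hψ
  have hψd : ∀ t : ℝ, t ≠ 0 → HasDerivAt ψ ((deriv h t * t - h t) / t^2) t := by
    intro t ht
    have h1 : HasDerivAt h (deriv h t) t := (hsm.differentiable (by simp) t).hasDerivAt
    have h2 : HasDerivAt (fun s : ℝ => s) 1 t := hasDerivAt_id t
    exact (h1.div h2 ht).congr_deriv (by simp)
  have hev : pd j g =ᶠ[nhds x] (fun y : Eu n => ψ ‖y‖ * (EuclideanSpace.proj j) y) := by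
    have hop : IsOpen {y : Eu n | y ≠ 0} := isOpen_compl_singleton
    filter_upwards [hop.mem_nhds hx] with y hy
    rw [pd_g h hsm g hg hy]
    simp [hψ]
    ring
  have hw : HasFDerivAt (fun y : Eu n => ψ ‖y‖)
      (((deriv h ‖x‖ * ‖x‖ - h ‖x‖) / ‖x‖^2 * ‖x‖⁻¹) • innerSL ℝ x) x :=
    radial_hasFDerivAt hx (hψd ‖x‖ hx')
  have hp : HasFDerivAt (fun y : Eu n => (EuclideanSpace.proj j) y)
      (EuclideanSpace.proj (𝕜 := ℝ) j) x := (EuclideanSpace.proj (𝕜 := ℝ) (i := j)).hasFDerivAt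
  have hu : HasFDerivAt (fun y : Eu n => ψ ‖y‖ * (EuclideanSpace.proj j) y)
      (ψ ‖x‖ • (EuclideanSpace.proj (𝕜 := ℝ) j)
        + ((EuclideanSpace.proj j) x) • (((deriv h ‖x‖ * ‖x‖ - h ‖x‖) / ‖x‖^2 * ‖x‖⁻¹) • innerSL ℝ x)) x :=
    hw.mul hp
  rw [pd2, pd, hev.fderiv_eq, hu.fderiv]
  simp [inner_single', hψ]
  rcases eq_or_ne i j with rfl | hij
  · simp
    field_simp
  · simp [hij, Ne.symm hij]
    field_simp

end main

lemma coord_sq_integral {n : ℕ} (G : ℝ → ℝ) (i j : Fin n) :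
    ∫ x : Eu n, G ‖x‖ * (x i)^2 = ∫ x : Eu n, G ‖x‖ * (x j)^2 := by
  have key := MeasureTheory.integral_comp
    (LinearIsometryEquiv.piLpCongrLeft 2 ℝ ℝ (Equiv.swap i j) : Eu n ≃ₗᵢ[ℝ] Eu n)
    (fun x : Eu n => G ‖x‖ * (x i)^2)
  rw [← key]
  congr 1
  funext x
  rw [LinearIsometryEquiv.norm_map]
  congr 2
  rw [LinearIsometryEquiv.piLpCongrLeft_apply]
  rw [Equiv.piCongrLeft'_apply, Equiv.symm_swap, Equiv.swap_apply_left]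

lemma radial_integral {n : ℕ} (hn : 1 ≤ n) (f : ℝ → ℝ) (hf1 : ∀ r, 1 ≤ r → f r = 0) :
    ∫ x : Eu n, f ‖x‖
      = ((n : ℝ) * (volume (Metric.ball (0:Eu n) 1)).toReal) * ∫ r in (0:ℝ)..1, r^(n-1) * f r := by
  haveI : Nontrivial (Eu n) := ⟨⟨EuclideanSpace.single ⟨0, hn⟩ 1, 0, by
    intro hcon
    have := congrArg (fun v : Eu n => v ⟨0, hn⟩) hcon
    simp [EuclideanSpace.single_apply] at this⟩⟩
  have key := MeasureTheory.integral_fun_norm_addHaar (volume : Measure (Eu n)) f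
  rw [key]
  rw [finrank_euclideanSpace_fin]
  have h1 : ∫ y in Set.Ioi (0:ℝ), y^(n-1) • f y = ∫ y in Set.Ioc (0:ℝ) 1, y^(n-1) * f y := by
    rw [← integral_indicator measurableSet_Ioi, ← integral_indicator measurableSet_Ioc]
    congr 1
    funext y
    simp only [Set.indicator_apply, Set.mem_Ioi, Set.mem_Ioc, smul_eq_mul]
    by_cases h0 : 0 < y
    · by_cases h2 : y ≤ 1
      · simp [h0, h2]
      · simp [h0, h2, hf1 y (by linarith)]
    · simp [h0]
  rw [h1, ← intervalIntegral.integral_of_le zero_le_one]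
  simp only [nsmul_eq_mul, smul_eq_mul, measureReal_def]
  ring

lemma cont_div_normpow {n : ℕ} {f : Eu n → ℝ} (hf : Continuous f)
    (h0 : ∀ᶠ y in nhds (0 : Eu n), f y = 0) (m : ℕ) :
    Continuous fun y : Eu n => f y / ‖y‖ ^ m := by
  rw [continuous_iff_continuousAt]; intro x
  rcases eq_or_ne x 0 with rfl | hx
  · have hev : (fun _ : Eu n => (0:ℝ)) =ᶠ[nhds (0 : Eu n)] fun y => f y / ‖y‖ ^ m := by
      filter_upwards [h0] with y hy
      simp [hy]
    exact continuousAt_const.congr hev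
  · exact ContinuousAt.div hf.continuousAt ((continuous_norm.pow m).continuousAt)
      (pow_ne_zero m (norm_ne_zero_iff.2 hx))

lemma integrable_aux {n : ℕ} {F : Eu n → ℝ} (hF : Continuous F)
    (hs : ∀ x : Eu n, 1 ≤ ‖x‖ → F x = 0) : Integrable F := by
  apply hF.integrable_of_hasCompactSupport
  apply HasCompactSupport.intro (isCompact_closedBall (0 : Eu n) 1)
  intro x hx
  apply hs
  simp only [Metric.mem_closedBall, dist_zero_right] at hx
  linarith

lemma ibp_aux (h : ℝ → ℝ) (hsm : ContDiff ℝ (⊤ : ℕ∞) h) (k m : ℕ) (hk : 1 ≤ k)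
    (h0 : h 0 = 0) (h1 : h 1 = 0) :
    (k:ℝ) * ∫ r in (0:ℝ)..1, (h r)^(k-1) * deriv h r * r^(m+1)
      = -((m:ℝ)+1) * ∫ r in (0:ℝ)..1, (h r)^k * r^m := by
  have hd : Continuous (deriv h) := hsm.continuous_deriv (by simp)
  have hc : Continuous h := hsm.continuous
  have hu : ∀ r ∈ Set.Ioo (min (0:ℝ) 1) (max (0:ℝ) 1), HasDerivAt (fun s => h s ^ k)
      ((k:ℝ) * h r ^ (k-1) * deriv h r) r := fun r _ =>
    ((hsm.differentiable (by simp) r).hasDerivAt).pow k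
  have hv : ∀ r ∈ Set.Ioo (min (0:ℝ) 1) (max (0:ℝ) 1), HasDerivAt (fun s : ℝ => s ^ (m+1))
      (((m:ℝ)+1) * r ^ m) r := by
    intro r _
    simpa using hasDerivAt_pow (m+1) r
  have hiu : IntervalIntegrable (fun r => (k:ℝ) * h r ^ (k-1) * deriv h r) volume 0 1 :=
    (Continuous.intervalIntegrable (by continuity) 0 1)
  have hiv : IntervalIntegrable (fun r => ((m:ℝ)+1) * r ^ m) volume 0 1 :=
    (Continuous.intervalIntegrable (by continuity) 0 1)
  have key := intervalIntegral.integral_deriv_mul_eq_sub_of_hasDerivAt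
    ((hc.pow k).continuousOn) ((continuous_pow (m+1)).continuousOn) hu hv hiu hiv
  simp only [Pi.pow_apply] at key
  rw [h1, h0] at key
  simp only [zero_pow (by omega : k ≠ 0), zero_mul, one_pow, mul_one, sub_zero] at key
  rw [intervalIntegral.integral_add] at key
  · have e1 : ∫ r in (0:ℝ)..1, (k:ℝ) * h r ^ (k-1) * deriv h r * r^(m+1)
        = (k:ℝ) * ∫ r in (0:ℝ)..1, h r ^ (k-1) * deriv h r * r^(m+1) := by
      rw [← intervalIntegral.integral_const_mul]
      congr 1; funext r; ring
    have e2 : ∫ r in (0:ℝ)..1, h r ^ k * (((m:ℝ)+1) * r^m)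
        = ((m:ℝ)+1) * ∫ r in (0:ℝ)..1, h r ^ k * r^m := by
      rw [← intervalIntegral.integral_const_mul]
      congr 1; funext r; ring
    rw [e1, e2] at key
    linarith
  · exact (Continuous.intervalIntegrable (by continuity) 0 1)
  · exact (Continuous.intervalIntegrable (by continuity) 0 1)

lemma const_eq (n : ℕ) (hn : 2 ≤ n) :
    (n : ℝ) * (volume (Metric.ball (0:Eu n) 1)).toReal
      = 2 * π * ∏ i ∈ Finset.Icc 1 (n-2), ∫ θ in (0:ℝ)..π, Real.sin θ ^ i := by
  haveI : Nonempty (Fin n) := ⟨⟨0, by omega⟩⟩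
  rw [EuclideanSpace.volume_ball, sinprod']
  have hΓpos : 0 < Real.Gamma ((n:ℝ)/2 + 1) := Real.Gamma_pos_of_pos (by positivity)
  simp only [Fintype.card_fin, ENNReal.ofReal_one, one_pow, one_mul]
  rw [ENNReal.toReal_ofReal (by positivity)]
  have e1 : ((n-2:ℕ):ℝ) = (n:ℝ) - 2 := by
    rw [Nat.cast_sub hn]; norm_num
  rw [e1]
  have e2 : ((n:ℝ)-2)/2 + 1 = (n:ℝ)/2 := by ring
  rw [e2]
  have e3 : Real.Gamma ((n:ℝ)/2 + 1) = ((n:ℝ)/2) * Real.Gamma ((n:ℝ)/2) :=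
    Real.Gamma_add_one (by positivity)
  have e4 : Real.sqrt π ^ n = Real.sqrt π ^ (n-2) * π := by
    have h5 : Real.sqrt π ^ ((n-2)+2) = Real.sqrt π ^ (n-2) * Real.sqrt π ^ 2 := pow_add _ _ _
    rw [show (n-2)+2 = n from by omega] at h5
    rw [h5, Real.sq_sqrt pi_pos.le]
  rw [e3, e4]
  have hΓ : 0 < Real.Gamma ((n:ℝ)/2) := Real.Gamma_pos_of_pos (by positivity)
  have hn' : (0:ℝ) < n := by positivity
  field_simp

end Aux

theorem stmt10 (n k : ℕ) (hn : 2 ≤ n) (hk : 2 ≤ k) (hkn : k ≤ n)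
    (h : ℝ → ℝ) (hsm : ContDiff ℝ (⊤ : ℕ∞) h) (hsupp : tsupport h ⊆ Set.Ioo 0 1)
    (g : Eu n → ℝ) (hg : ∀ x : Eu n, g x = ∫ r in (0:ℝ)..‖x‖, h r)
    (α : Finset (Fin n)) (hα : α.card = k) :
    ∫ x in Metric.ball (0 : Eu n) 1, minor (hess g x) α α * ‖x‖ ^ 2 =
      -(2 / (n:ℝ)) * (2 * Real.pi)
        * (∏ i ∈ Finset.Icc 1 (n-2), ∫ θ in (0:ℝ)..Real.pi, Real.sin θ ^ i)
        * ∫ r in (0:ℝ)..1, h r ^ k * r ^ (n + 1 - k) := by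
  classical
  have hc : Continuous h := hsm.continuous
  have hd : Continuous (deriv h) := hsm.continuous_deriv (by simp)
  have hout : ∀ r : ℝ, r ∉ Set.Ioo (0:ℝ) 1 → h r = 0 := fun r hr =>
    image_eq_zero_of_notMem_tsupport (fun hmem => hr (hsupp hmem))
  have h0 : h 0 = 0 := hout 0 (by simp)
  have h1 : h 1 = 0 := hout 1 (by simp)
  have hk0 : k ≠ 0 := by omega
  have hk1 : k - 1 ≠ 0 := by omega
  have hnR : (0:ℝ) < n := by exact_mod_cast (by omega : 0 < n)
  have hev0R : ∀ᶠ t in nhds (0:ℝ), h t = 0 := by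
    have hmem : (tsupport h)ᶜ ∈ nhds (0:ℝ) :=
      (isClosed_tsupport h).isOpen_compl.mem_nhds (fun hmem => by simpa using (hsupp hmem).1)
    filter_upwards [hmem] with t ht using image_eq_zero_of_notMem_tsupport ht
  have hnorm0 : Filter.Tendsto (fun y : Eu n => ‖y‖) (nhds 0) (nhds (0:ℝ)) := by
    simpa using (continuous_norm (E := Eu n)).tendsto (0 : Eu n)
  have hev0 : ∀ᶠ y in nhds (0 : Eu n), h ‖y‖ = 0 := hnorm0.eventually hev0R
  set Gr : ℝ → ℝ := fun t => h t^(k-1) * (deriv h t * t - h t) / t^k with hGrdef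
  set f1r : ℝ → ℝ := fun t => h t^k * t^2 / t^k with hf1rdef
  -- pointwise identity
  have key1 : ∀ x : Eu n, minor (hess g x) α α * ‖x‖^2
      = f1r ‖x‖ + Gr ‖x‖ * ∑ i ∈ α, (x i)^2 := by
    intro x
    rcases eq_or_ne x 0 with rfl | hx
    · simp [hf1rdef, hGrdef, norm_zero, zero_pow hk0, zero_pow hk1, h0]
    · have hr : ‖x‖ ≠ 0 := norm_ne_zero_iff.2 hx
      have hm := minor_eq' (hess g x) α hα hk (h ‖x‖ / ‖x‖)
        ((deriv h ‖x‖ * ‖x‖ - h ‖x‖) / ‖x‖^3) (fun i => x i)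
        (by
          intro i j _ _
          show pd2 i j g x = _
          rw [pd2_g h hsm g hg hx i j]
          ring)
      rw [hm]
      obtain ⟨K, hK⟩ : ∃ K, k = K + 1 := ⟨k-1, by omega⟩
      subst hK
      simp only [Nat.add_sub_cancel, hf1rdef, hGrdef]
      rw [div_pow]
      field_simp
      ring
  -- vanishing at large radius
  have hGr1 : ∀ t : ℝ, 1 ≤ t → Gr t = 0 := by
    intro t ht
    have ht0 : h t = 0 := hout t (fun hmem => absurd hmem.2 (by linarith))
    simp [hGrdef, ht0, zero_pow hk1]
  have hf1r1 : ∀ t : ℝ, 1 ≤ t → f1r t = 0 := by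
    intro t ht
    have ht0 : h t = 0 := hout t (fun hmem => absurd hmem.2 (by linarith))
    simp [hf1rdef, ht0, zero_pow hk0]
  -- continuity
  have hGnum : Continuous fun y : Eu n => h ‖y‖^(k-1) * (deriv h ‖y‖ * ‖y‖ - h ‖y‖) :=
    ((hc.comp continuous_norm).pow (k-1)).mul
      (((hd.comp continuous_norm).mul continuous_norm).sub (hc.comp continuous_norm))
  have hGev : ∀ᶠ y in nhds (0 : Eu n), h ‖y‖^(k-1) * (deriv h ‖y‖ * ‖y‖ - h ‖y‖) = 0 := by
    filter_upwards [hev0] with y hy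
    simp [hy, zero_pow hk1]
  have hGrc : Continuous fun y : Eu n => Gr ‖y‖ := by
    simp only [hGrdef]
    exact cont_div_normpow hGnum hGev k
  have hf1num : Continuous fun y : Eu n => h ‖y‖^k * ‖y‖^2 :=
    ((hc.comp continuous_norm).pow k).mul (continuous_norm.pow 2)
  have hf1ev : ∀ᶠ y in nhds (0 : Eu n), h ‖y‖^k * ‖y‖^2 = 0 := by
    filter_upwards [hev0] with y hy
    simp [hy, zero_pow hk0]
  have hf1c : Continuous fun y : Eu n => f1r ‖y‖ := by
    simp only [hf1rdef]
    exact cont_div_normpow hf1num hf1ev k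
  have hproj : ∀ i : Fin n, Continuous fun y : Eu n => y i :=
    fun i => (EuclideanSpace.proj (𝕜 := ℝ) (i := i)).continuous
  -- integrability
  have hii : ∀ i : Fin n, Integrable (fun x : Eu n => Gr ‖x‖ * (x i)^2) := by
    intro i
    apply integrable_aux (hGrc.mul ((hproj i).pow 2))
    intro x hx
    simp [hGr1 ‖x‖ hx]
  have hif2 : Integrable (fun x : Eu n => Gr ‖x‖ * ‖x‖^2) :=
    integrable_aux (hGrc.mul (continuous_norm.pow 2)) (fun x hx => by simp [hGr1 _ hx])
  have hif1 : Integrable (fun x : Eu n => f1r ‖x‖) :=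
    integrable_aux hf1c (fun x hx => by simp [hf1r1 _ hx])
  have hsum_eq : (fun x : Eu n => Gr ‖x‖ * ∑ i ∈ α, (x i)^2)
      = fun x : Eu n => ∑ i ∈ α, Gr ‖x‖ * (x i)^2 := by
    funext x; rw [Finset.mul_sum]
  have hifsum : Integrable (fun x : Eu n => Gr ‖x‖ * ∑ i ∈ α, (x i)^2) := by
    rw [hsum_eq]; exact integrable_finset_sum α (fun i _ => hii i)
  set i0 : Fin n := ⟨0, by omega⟩ with hi0
  set J : ℝ := ∫ x : Eu n, Gr ‖x‖ * (x i0)^2 with hJ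
  have hJsum : ∫ x : Eu n, Gr ‖x‖ * ∑ i ∈ α, (x i)^2 = (k:ℝ) * J := by
    rw [hsum_eq, integral_finset_sum α (fun i _ => hii i)]
    rw [Finset.sum_congr rfl (fun i _ => coord_sq_integral Gr i i0)]
    rw [Finset.sum_const, hα, nsmul_eq_mul]
  have hnJ : (n:ℝ) * J = ∫ x : Eu n, Gr ‖x‖ * ‖x‖^2 := by
    have e1 : ∫ x : Eu n, Gr ‖x‖ * ‖x‖^2 = ∑ i : Fin n, ∫ x : Eu n, Gr ‖x‖ * (x i)^2 := by
      rw [← integral_finset_sum Finset.univ (fun i _ => hii i)]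
      congr 1; funext x
      rw [← Finset.mul_sum]
      congr 1
      rw [EuclideanSpace.norm_eq]
      rw [Real.sq_sqrt (by positivity)]
      exact Finset.sum_congr rfl (fun i _ => by rw [Real.norm_eq_abs, sq_abs])
    rw [e1, Finset.sum_congr rfl (fun i _ => coord_sq_integral Gr i i0), Finset.sum_const]
    simp [nsmul_eq_mul]
    exact Or.inl hJ
  -- pass to the whole space
  have step1 : ∫ x in Metric.ball (0 : Eu n) 1, minor (hess g x) α α * ‖x‖ ^ 2
      = ∫ x : Eu n, (f1r ‖x‖ + Gr ‖x‖ * ∑ i ∈ α, (x i)^2) := by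
    have e := setIntegral_eq_integral_of_forall_compl_eq_zero
      (μ := volume) (s := Metric.ball (0:Eu n) 1)
      (f := fun x : Eu n => f1r ‖x‖ + Gr ‖x‖ * ∑ i ∈ α, (x i)^2)
      (by
        intro x hx
        have hx1 : 1 ≤ ‖x‖ := by
          simp only [Metric.mem_ball, dist_zero_right, not_lt] at hx
          exact hx
        simp [hf1r1 _ hx1, hGr1 _ hx1])
    simp only [key1]
    exact e
  have split : ∫ x : Eu n, (f1r ‖x‖ + Gr ‖x‖ * ∑ i ∈ α, (x i)^2)
      = (∫ x : Eu n, f1r ‖x‖) + (k:ℝ) * J := by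
    rw [integral_add hif1 hifsum, hJsum]
  -- radial reduction
  set V : ℝ := (n : ℝ) * (volume (Metric.ball (0:Eu n) 1)).toReal with hV
  have hA1 : ∫ x : Eu n, f1r ‖x‖ = V * ∫ r in (0:ℝ)..1, r^(n-1) * f1r r :=
    radial_integral (by omega) f1r hf1r1
  have hA2 : ∫ x : Eu n, Gr ‖x‖ * ‖x‖^2 = V * ∫ r in (0:ℝ)..1, r^(n-1) * (Gr r * r^2) :=
    radial_integral (by omega) (fun t => Gr t * t^2) (fun r hr => by simp [hGr1 r hr])
  set I : ℝ := ∫ r in (0:ℝ)..1, h r ^ k * r ^ (n + 1 - k) with hI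
  have hB1 : ∫ r in (0:ℝ)..1, r^(n-1) * f1r r = I := by
    rw [hI]
    apply intervalIntegral.integral_congr
    intro r hr
    simp only [hf1rdef]
    rcases eq_or_ne r 0 with rfl | hr0
    · simp [zero_pow (show n-1 ≠ 0 by omega), h0, zero_pow hk0]
    · have e : r^(n-1) * (h r^k * r^2 / r^k) = h r^k * (r^(n-1) * r^2) / r^k := by ring
      rw [e, ← pow_add, show n-1+2 = n+1 from by omega, mul_div_assoc,
        pow_sub₀ r hr0 (by omega : k ≤ n+1)]
      ring
  have hB2 : ∫ r in (0:ℝ)..1, r^(n-1) * (Gr r * r^2)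
      = (∫ r in (0:ℝ)..1, h r^(k-1) * deriv h r * r^(n+2-k)) - I := by
    have e0 : ∫ r in (0:ℝ)..1, r^(n-1) * (Gr r * r^2)
        = ∫ r in (0:ℝ)..1, (h r^(k-1) * deriv h r * r^(n+2-k) - h r^k * r^(n+1-k)) := by
      apply intervalIntegral.integral_congr
      intro r hr
      simp only [hGrdef]
      rcases eq_or_ne r 0 with rfl | hr0
      · simp [zero_pow (show n-1 ≠ 0 by omega), h0, zero_pow hk0, zero_pow hk1,
          zero_pow (show n+2-k ≠ 0 by omega), zero_pow (show n+1-k ≠ 0 by omega)]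
      · have e : r^(n-1) * (h r^(k-1) * (deriv h r * r - h r) / r^k * r^2)
            = (h r^(k-1) * deriv h r) * (r^(n-1) * (r^2 * r)) / r^k
              - (h r^(k-1) * h r) * (r^(n-1) * r^2) / r^k := by
          field_simp
        rw [e]
        have e1 : r^(n-1) * (r^2 * r) = r^(n+2) := by
          rw [show r^2 * r = r^3 from by ring, ← pow_add]
          congr 1
          omega
        have e2 : r^(n-1) * r^2 = r^(n+1) := by
          rw [← pow_add]; congr 1; omega
        have e3 : h r^(k-1) * h r = h r^k := by
          rw [← pow_succ]; congr 1; omega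
        rw [e1, e2, e3, mul_div_assoc, mul_div_assoc,
          pow_sub₀ r hr0 (by omega : k ≤ n+2), pow_sub₀ r hr0 (by omega : k ≤ n+1)]
        ring
    have cont1 : Continuous fun r : ℝ => h r^(k-1) * deriv h r * r^(n+2-k) :=
      ((hc.pow _).mul hd).mul (continuous_pow _)
    have cont2 : Continuous fun r : ℝ => h r^k * r^(n+1-k) :=
      (hc.pow _).mul (continuous_pow _)
    rw [e0, intervalIntegral.integral_sub
      (cont1.intervalIntegrable 0 1) (cont2.intervalIntegrable 0 1), hI]
  -- integration by parts
  have hC := ibp_aux h hsm k (n+1-k) (by omega) h0 h1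
  rw [show (n+1-k)+1 = n+2-k from by omega] at hC
  have hcast : ((n+1-k:ℕ):ℝ) = (n:ℝ) + 1 - k := by
    rw [Nat.cast_sub (by omega)]; push_cast; ring
  rw [hcast] at hC
  set J2 : ℝ := ∫ r in (0:ℝ)..1, h r^(k-1) * deriv h r * r^(n+2-k) with hJ2
  have hkR : (0:ℝ) < k := by exact_mod_cast (by omega : 0 < k)
  have hJ2val : J2 = -((n:ℝ)+2-k) * I / k := by
    rw [eq_div_iff hkR.ne']
    linarith
  have hJval : J = V * (J2 - I) / n := by
    rw [eq_div_iff hnR.ne']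
    have h' := hnJ
    rw [hA2, hB2] at h'
    linarith [h']
  rw [step1, split, hA1, hB1, hJval, hJ2val]
  have hV2 : 2 * Real.pi * (∏ i ∈ Finset.Icc 1 (n-2), ∫ θ in (0:ℝ)..Real.pi, Real.sin θ ^ i)
      = V := (const_eq n hn).symm
  rw [show -(2 / (n:ℝ)) * (2 * Real.pi)
        * (∏ i ∈ Finset.Icc 1 (n-2), ∫ θ in (0:ℝ)..Real.pi, Real.sin θ ^ i) * I
      = -(2 / (n:ℝ)) * (2 * Real.pi
        * (∏ i ∈ Finset.Icc 1 (n-2), ∫ θ in (0:ℝ)..Real.pi, Real.sin θ ^ i)) * I from by ring,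
    hV2]
  field_simp
  ring

end
end

section
/- Let 3 ≤ k ≤ n, m ∈ ℕ with m ≥ 1, and define v : ℝⁿ → ℝ by v(x) = ( ∏_{i=1}^{k−1} sin²(m x_i) ) · ( ∏_{i=k}^{n} x_i ). Then for every j ∈ {k, …, n} and every x ∈ ℝⁿ, writing γ = (1,…,k−1), M_{γ+j}^{γ+j}(D²v) = (−1)^{k−1} 2^k m^{2k−2} ( ∏_{i ∈ {k,…,n}, i ≠ j} x_i )^k ( ∏_{i=1}^{k−1} sin²(m x_i) )^{k−1} x_j^{k−2} ( ∑_{i=1}^{k−1} cos²(m x_i) ). -/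
open MeasureTheory Filter Topology Finset

noncomputable section

/-- The multi-index `γ = (1,…,k-1)` (the first `k-1` coordinates, 0-based). -/
def gam (n k : ℕ) : Finset (Fin n) := Finset.univ.filter fun i => (i : ℕ) < k - 1

/-- The complementary coordinates `(k,…,n)` (0-based: indices `≥ k-1`). -/
def delt (n k : ℕ) : Finset (Fin n) := Finset.univ.filter fun i => k - 1 ≤ (i : ℕ)

/-! Write `v(y) = ∏ₗ gₗ(yₗ)` with `gₗ = sin²(m·)` on `γ` and `gₗ = id` elsewhere. A second
partial derivative of such a product differentiates one or two factors only, so on the rows and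
columns `γ+j` the Hessian factors as `D N D`: `D` is diagonal with entries `∏_{γ∖a} sin(m xᵢ)`
(and `∏_γ sin(m xᵢ)` for `j`), and, with `c_a = cos(m x_a)`, `B = 2m ∏_{δ∖j} xᵢ` and `A = m x_j B`,
`N = [[A(2ccᵀ - 1), Bc], [Bcᵀ, 0]]`, where `sin² + cos² = 1` was used on the diagonal. A row
operation with the last row removes the rank-one part `2A ccᵀ`, leaving the bordered determinant
`det [[-A·1, Bc], [Bcᵀ, 0]] = -(-A)^(k-2) B² |c|²`. Multiplying by a block matrix of determinant
`A` proves this identity times `A`; it is a polynomial identity in `A`, so `A` can be cancelled. -/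

open Function Real

theorem Finset.prod_update_apply {ι α M : Type*} [DecidableEq ι] [CommMonoid M] {s : Finset ι}
    {i : ι} (hi : i ∈ s) (g : ι → α → M) (h : α → M) (x : ι → α) :
    ∏ l ∈ s, update g i h l (x l) = h (x i) * ∏ l ∈ s.erase i, g l (x l) := by
  rw [← mul_prod_erase s _ hi, update_self]
  exact congrArg _ (prod_congr rfl fun l hl => by rw [update_of_ne (ne_of_mem_erase hl)])

section ProductHessian

variable {n : ℕ} {g g' g'' : Fin n → ℝ → ℝ}

theorem pd_prod_s13 (hg : ∀ l t, HasDerivAt (g l) (g' l t) t) (i : Fin n) :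
    pd i (fun y : Eu n => ∏ l, g l (y l)) = fun y => ∏ l, update g i (g' i) l (y l) := by
  funext x
  have hfactor (l : Fin n) : HasFDerivAt (fun y : Eu n => g l (y l))
      (g' l (x l) • (EuclideanSpace.proj l : Eu n →L[ℝ] ℝ)) x :=
    (hg l (x l)).comp_hasFDerivAt x (EuclideanSpace.proj (𝕜 := ℝ) l).hasFDerivAt
  rw [pd, (HasFDerivAt.finsetProd fun l _ => hfactor l).fderiv, prod_update_apply (mem_univ i)]
  simp only [_root_.sum_apply, smul_apply, PiLp.proj_apply, PiLp.single_apply, smul_eq_mul,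
    mul_ite, mul_one, mul_zero, sum_ite_eq', mem_univ, ↓reduceIte]
  exact mul_comm _ _

variable (hg : ∀ l t, HasDerivAt (g l) (g' l t) t) (hg' : ∀ l t, HasDerivAt (g' l) (g'' l t) t)
include hg hg'

theorem pd2_prod (a b : Fin n) (x : Eu n) :
    pd2 a b (fun y : Eu n => ∏ l, g l (y l)) x
      = ∏ l, update (update g b (g' b)) a (update g' b (g'' b) a) l (x l) := by
  have hupdate (l : Fin n) (t : ℝ) :
      HasDerivAt (update g b (g' b) l) (update g' b (g'' b) l t) t := by
    rcases eq_or_ne l b with rfl | hl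
    · simpa only [update_self] using hg' l t
    · simpa only [update_of_ne hl] using hg l t
  rw [pd2, pd_prod_s13 hg, pd_prod_s13 hupdate]

theorem pd2_prod_self (a : Fin n) (x : Eu n) :
    pd2 a a (fun y : Eu n => ∏ l, g l (y l)) x = g'' a (x a) * ∏ l ∈ univ.erase a, g l (x l) := by
  rw [pd2_prod hg hg', update_self, update_idem, prod_update_apply (mem_univ a)]

theorem pd2_prod_of_ne {a b : Fin n} (hab : a ≠ b) (x : Eu n) :
    pd2 a b (fun y : Eu n => ∏ l, g l (y l)) x
      = g' a (x a) * g' b (x b) * ∏ l ∈ (univ.erase a).erase b, g l (x l) := by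
  rw [pd2_prod hg hg', update_of_ne hab, prod_update_apply (mem_univ a),
    prod_update_apply (mem_erase.2 ⟨hab.symm, mem_univ b⟩), mul_assoc]

end ProductHessian

theorem prod_ite_id_apply {n : ℕ} (s t : Finset (Fin n)) (f : ℝ → ℝ) (x : Eu n) :
    ∏ l ∈ t, (if l ∈ s then f else id) (x l) = (∏ l ∈ t ∩ s, f (x l)) * ∏ l ∈ t \ s, x l := by
  simp only [ite_apply, id]
  exact prod_piecewise t s (fun l => f (x l)) (fun l => x l)

section SeparableHessian

variable {n : ℕ} {s : Finset (Fin n)} {f f' f'' : ℝ → ℝ}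

theorem hasDerivAt_ite_id (hf : ∀ t, HasDerivAt f (f' t) t) (l : Fin n) (t : ℝ) :
    HasDerivAt (if l ∈ s then f else id) ((if l ∈ s then f' else fun _ => 1) t) t := by
  split_ifs
  · exact hf t
  · exact hasDerivAt_id t

theorem hasDerivAt_ite_one (hf' : ∀ t, HasDerivAt f' (f'' t) t) (l : Fin n) (t : ℝ) :
    HasDerivAt (if l ∈ s then f' else fun _ => 1) ((if l ∈ s then f'' else fun _ => 0) t) t := by
  split_ifs
  · exact hf' t
  · exact hasDerivAt_const t 1

variable (hf : ∀ t, HasDerivAt f (f' t) t) (hf' : ∀ t, HasDerivAt f' (f'' t) t) (x : Eu n)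
include hf hf'

theorem pd2_prod_ite_id_self_of_mem {a : Fin n} (ha : a ∈ s) :
    pd2 a a (fun y : Eu n => ∏ l, (if l ∈ s then f else id) (y l)) x
      = f'' (x a) * ((∏ l ∈ s.erase a, f (x l)) * ∏ l ∈ sᶜ, x l) := by
  rw [pd2_prod_self (hasDerivAt_ite_id hf) (hasDerivAt_ite_one hf'), prod_ite_id_apply, if_pos ha]
  congr 3 <;> ext l <;> grind [mem_compl]

theorem pd2_prod_ite_id_self_of_notMem {j : Fin n} (hj : j ∉ s) :
    pd2 j j (fun y : Eu n => ∏ l, (if l ∈ s then f else id) (y l)) x = 0 := by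
  rw [pd2_prod_self (hasDerivAt_ite_id hf) (hasDerivAt_ite_one hf'), if_neg hj, zero_mul]

theorem pd2_prod_ite_id_of_mem_of_mem {a b : Fin n} (ha : a ∈ s) (hb : b ∈ s) (hab : a ≠ b) :
    pd2 a b (fun y : Eu n => ∏ l, (if l ∈ s then f else id) (y l)) x
      = f' (x a) * f' (x b) * ((∏ l ∈ (s.erase a).erase b, f (x l)) * ∏ l ∈ sᶜ, x l) := by
  rw [pd2_prod_of_ne (hasDerivAt_ite_id hf) (hasDerivAt_ite_one hf') hab, prod_ite_id_apply,
    if_pos ha, if_pos hb]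
  congr 3 <;> ext l <;> grind [mem_compl]

theorem pd2_prod_ite_id_of_mem_of_notMem {a j : Fin n} (ha : a ∈ s) (hj : j ∉ s) :
    pd2 a j (fun y : Eu n => ∏ l, (if l ∈ s then f else id) (y l)) x
      = f' (x a) * ((∏ l ∈ s.erase a, f (x l)) * ∏ l ∈ sᶜ.erase j, x l) := by
  rw [pd2_prod_of_ne (hasDerivAt_ite_id hf) (hasDerivAt_ite_one hf') (ne_of_mem_of_not_mem ha hj),
    prod_ite_id_apply, if_pos ha, if_neg hj, mul_one]
  congr 3 <;> ext l <;> grind [mem_compl]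

theorem pd2_prod_ite_id_of_notMem_of_mem {a j : Fin n} (ha : a ∈ s) (hj : j ∉ s) :
    pd2 j a (fun y : Eu n => ∏ l, (if l ∈ s then f else id) (y l)) x
      = f' (x a) * ((∏ l ∈ s.erase a, f (x l)) * ∏ l ∈ sᶜ.erase j, x l) := by
  rw [pd2_prod_of_ne (hasDerivAt_ite_id hf) (hasDerivAt_ite_one hf')
    (ne_of_mem_of_not_mem ha hj).symm, prod_ite_id_apply, if_pos ha, if_neg hj, one_mul]
  congr 3 <;> ext l <;> grind [mem_compl]

end SeparableHessian

theorem hasDerivAt_sin_mul_sq (m t : ℝ) :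
    HasDerivAt (fun t => sin (m * t) ^ 2) (2 * m * sin (m * t) * cos (m * t)) t := by
  have hmul : HasDerivAt (fun t => m * t) m t := by simpa using (hasDerivAt_id t).const_mul m
  exact (hmul.sin.pow 2).congr_deriv (by ring)

theorem hasDerivAt_sin_mul_mul_cos_mul (m t : ℝ) :
    HasDerivAt (fun t => 2 * m * sin (m * t) * cos (m * t))
      (2 * m ^ 2 * (cos (m * t) ^ 2 - sin (m * t) ^ 2)) t := by
  have hmul : HasDerivAt (fun t => m * t) m t := by simpa using (hasDerivAt_id t).const_mul m
  exact ((hmul.sin.const_mul (2 * m)).mul hmul.cos).congr_deriv (by ring)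

open Matrix

theorem Matrix.det_fromBlocks_add_mul_zero {m n R : Type*} [Fintype m] [Fintype n] [DecidableEq m]
    [DecidableEq n] [CommRing R] (A : Matrix m m R) (B : Matrix m n R) (C : Matrix n m R)
    (W : Matrix m n R) : (fromBlocks (A + W * C) B C 0).det = (fromBlocks A B C 0).det := by
  have h : fromBlocks (A + W * C) B C 0 = fromBlocks 1 W 0 1 * fromBlocks A B C 0 := by
    simp [fromBlocks_multiply, add_comm]
  rw [h, det_mul, det_fromBlocks_zero₂₁, det_one, det_one, one_mul, one_mul]

theorem Matrix.det_fromBlocks_smul_one_replicateCol_replicateRow_zero_mul {m R : Type*}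
    [Fintype m] [DecidableEq m] [CommRing R] (a : R) (u v : m → R) :
    (fromBlocks (a • 1) (replicateCol Unit u) (replicateRow Unit v) 0).det * a
      = -(a ^ Fintype.card m * (v ⬝ᵥ u)) := by
  have h : fromBlocks (a • 1) (replicateCol Unit u) (replicateRow Unit v) 0
      * fromBlocks 1 (-replicateCol Unit u) 0 (a • 1)
      = fromBlocks (a • 1) 0 (replicateRow Unit v)
          (-(replicateRow Unit v * replicateCol Unit u)) := by
    simp [fromBlocks_multiply]
  have := congrArg det h
  rw [det_mul, det_fromBlocks_zero₂₁, det_fromBlocks_zero₁₂] at this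
  simpa [det_unique, replicateRow_mul_replicateCol_apply] using this

open Polynomial in
theorem Matrix.det_fromBlocks_smul_one_replicateCol_replicateRow_zero {m R : Type*} [Fintype m]
    [DecidableEq m] [CommRing R] (a : R) (u v : m → R) :
    (fromBlocks (a • 1) (replicateCol Unit u) (replicateRow Unit v) 0).det
      = -(a ^ (Fintype.card m - 1) * (v ⬝ᵥ u)) := by
  rcases isEmpty_or_nonempty m with hm | hm
  · have : replicateRow Unit v = 0 := by ext _ i; exact isEmptyElim i
    simp [this, det_fromBlocks_zero₂₁]
  set M : Matrix (m ⊕ Unit) (m ⊕ Unit) R[X] := fromBlocks ((X : R[X]) • 1)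
    (replicateCol Unit fun i => C (u i)) (replicateRow Unit fun i => C (v i)) 0
  have hX : M.det = -(X ^ (Fintype.card m - 1) * C (v ⬝ᵥ u)) := by
    apply (isRegular_X (R := R)).right
    simp only [M]
    rw [det_fromBlocks_smul_one_replicateCol_replicateRow_zero_mul,
      ← pow_sub_one_mul Fintype.card_ne_zero, (C : R →+* R[X]).map_dotProduct, neg_mul,
      mul_right_comm]
    rfl
  have hM : (evalRingHom a).mapMatrix M
      = fromBlocks (a • 1) (replicateCol Unit u) (replicateRow Unit v) 0 := by
    ext (i|i) (j|j)
    · by_cases h : i = j <;> simp [M, h]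
    all_goals simp [M]
  rw [← hM, ← RingHom.map_det, hX]
  simp only [map_neg, map_mul, map_pow, coe_evalRingHom, eval_X, eval_C]

theorem minor_map_self_eq_det_submatrix {N : ℕ} (A : Matrix (Fin N) (Fin N) ℝ) {ι : Type*}
    [Fintype ι] [DecidableEq ι] (e : ι ↪ Fin N) :
    minor A (univ.map e) (univ.map e) = (A.submatrix e e).det := by
  set s := univ.map e
  let τ : Fin #s ≃ ι := (s.orderIsoOfFin rfl).toEquiv.trans
    ((Equiv.subtypeEquivRight fun i => by simp [s]).trans (Equiv.ofInjective e e.injective).symm)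
  have hτ (p : Fin #s) : e (τ p) = s.orderIsoOfFin rfl p :=
    Equiv.apply_ofInjective_symm e.injective _
  rw [minor, dif_pos rfl, ← det_submatrix_equiv_self τ]
  congr 1
  ext p q
  simp [hτ]

def borderedMatrix {ι R : Type*} [DecidableEq ι] [CommRing R] (a : R) (w u : ι → R) :
    Matrix (ι ⊕ Unit) (ι ⊕ Unit) R :=
  fromBlocks (a • 1 + vecMulVec w u) (replicateCol Unit u) (replicateRow Unit u) 0

theorem det_borderedMatrix {ι R : Type*} [Fintype ι] [DecidableEq ι] [CommRing R] (a : R)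
    (w u : ι → R) : (borderedMatrix a w u).det = -(a ^ (Fintype.card ι - 1) * (u ⬝ᵥ u)) := by
  rw [borderedMatrix, vecMulVec_eq Unit, det_fromBlocks_add_mul_zero,
    det_fromBlocks_smul_one_replicateCol_replicateRow_zero]

theorem Finset.prod_prod_erase_mul_prod {ι M : Type*} [DecidableEq ι] [CommMonoid M]
    (s : Finset ι) (f : ι → M) :
    (∏ a ∈ s, ∏ l ∈ s.erase a, f l) * ∏ a ∈ s, f a = (∏ l ∈ s, f l) ^ #s := by
  rw [← prod_mul_distrib, prod_congr rfl fun a ha => prod_erase_mul s f ha, prod_const]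

def sinSqProd {n : ℕ} (s : Finset (Fin n)) (m : ℝ) (y : Eu n) : ℝ :=
  (∏ i ∈ s, sin (m * y i) ^ 2) * ∏ i ∈ sᶜ, y i

def borderIndex {n : ℕ} {s : Finset (Fin n)} {j : Fin n} (hj : j ∉ s) : s ⊕ Unit ↪ Fin n :=
  ⟨Sum.elim (↑) fun _ => j, Subtype.val_injective.sumElim (fun _ _ => by simp)
    fun a _ h => hj (h ▸ a.2)⟩

section SinSqProd

variable {n : ℕ} {s : Finset (Fin n)} {j : Fin n}

theorem sinSqProd_eq_prod_ite (s : Finset (Fin n)) (m : ℝ) :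
    sinSqProd s m = fun y => ∏ l, (if l ∈ s then (fun t => sin (m * t) ^ 2) else id) (y l) := by
  funext y
  rw [prod_ite_id_apply, univ_inter, ← compl_eq_univ_sdiff, sinSqProd]

theorem map_borderIndex (hj : j ∉ s) : univ.map (borderIndex hj) = s ∪ {j} := by
  ext i
  simp [borderIndex, or_comm, eq_comm]

theorem hess_sinSqProd_submatrix (hj : j ∉ s) (m : ℝ) (x : Eu n) :
    (hess (sinSqProd s m) x).submatrix (borderIndex hj) (borderIndex hj) =
      diagonal (fun p => ∏ i ∈ s.erase (borderIndex hj p), sin (m * x i))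
      * borderedMatrix (-(2 * m ^ 2 * x j * ∏ i ∈ sᶜ.erase j, x i))
          (fun a : s => 2 * m * x j * cos (m * x a))
          (fun a : s => 2 * m * (∏ i ∈ sᶜ.erase j, x i) * cos (m * x a))
      * diagonal (fun p => ∏ i ∈ s.erase (borderIndex hj p), sin (m * x i)) := by
  have hd := hasDerivAt_sin_mul_sq m
  have hd' := hasDerivAt_sin_mul_mul_cos_mul m
  have hP : ∏ i ∈ sᶜ, x i = x j * ∏ i ∈ sᶜ.erase j, x i :=
    (mul_prod_erase _ _ (mem_compl.2 hj)).symm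
  have hsin (a : s) : ∏ i ∈ s, sin (m * x i) = sin (m * x a) * ∏ i ∈ s.erase a, sin (m * x i) :=
    (mul_prod_erase _ _ a.2).symm
  ext (a|⟨⟩) (b|⟨⟩)
  all_goals simp only [submatrix_apply, diagonal_mul, mul_diagonal, borderedMatrix, hess, of_apply,
    sinSqProd_eq_prod_ite, borderIndex, Function.Embedding.coeFn_mk, Sum.elim_inl, Sum.elim_inr,
    fromBlocks_apply₁₁, fromBlocks_apply₁₂, fromBlocks_apply₂₁, fromBlocks_apply₂₂,
    Matrix.add_apply, Matrix.smul_apply, one_apply, vecMulVec_apply, replicateCol_apply,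
    replicateRow_apply, Matrix.zero_apply, smul_eq_mul, erase_eq_of_notMem hj]
  · rcases eq_or_ne a b with rfl | hab
    · rw [pd2_prod_ite_id_self_of_mem hd hd' x a.2, hP, prod_pow, if_pos rfl]
      linear_combination (-2 * m ^ 2 * x j * (∏ i ∈ sᶜ.erase j, x i)
        * (∏ i ∈ s.erase a, sin (m * x i)) ^ 2) * sin_sq_add_cos_sq (m * x a)
    · have hab' : (a : Fin n) ≠ b := Subtype.coe_ne_coe.2 hab
      have hb : (b : Fin n) ∈ s.erase a := mem_erase.2 ⟨hab'.symm, b.2⟩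
      have ha : (a : Fin n) ∈ s.erase b := mem_erase.2 ⟨hab', a.2⟩
      rw [pd2_prod_ite_id_of_mem_of_mem hd hd' x a.2 b.2 hab', hP, prod_pow, if_neg hab,
        ← mul_prod_erase _ _ hb, ← mul_prod_erase _ _ ha, erase_right_comm]
      ring
  · rw [pd2_prod_ite_id_of_mem_of_notMem hd hd' x a.2 hj, prod_pow, hsin a]
    ring
  · rw [pd2_prod_ite_id_of_notMem_of_mem hd hd' x b.2 hj, prod_pow, hsin b]
    ring
  · rw [pd2_prod_ite_id_self_of_notMem hd hd' x hj]
    simp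

theorem minor_hess_sinSqProd (hj : j ∉ s) (m : ℝ) (x : Eu n) :
    minor (hess (sinSqProd s m) x) (s ∪ {j}) (s ∪ {j})
      = (-1) ^ #s * 2 ^ (#s + 1) * m ^ (2 * #s) * (∏ i ∈ sᶜ.erase j, x i) ^ (#s + 1)
        * (∏ i ∈ s, sin (m * x i) ^ 2) ^ #s * x j ^ (#s - 1) * ∑ i ∈ s, cos (m * x i) ^ 2 := by
  set P := ∏ i ∈ sᶜ.erase j, x i with hP
  have hsum : ∑ a : s, 2 * m * P * cos (m * x a) * (2 * m * P * cos (m * x a))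
      = (2 * m * P) ^ 2 * ∑ i ∈ s, cos (m * x i) ^ 2 := by
    rw [Finset.sum_coe_sort s fun i => 2 * m * P * cos (m * x i) * (2 * m * P * cos (m * x i)),
      mul_sum]
    exact sum_congr rfl fun _ _ => by ring
  rw [← map_borderIndex hj, minor_map_self_eq_det_submatrix, hess_sinSqProd_submatrix, det_mul,
    det_mul, det_borderedMatrix, det_diagonal, Fintype.prod_sum_type, dotProduct, hsum]
  simp only [borderIndex, Function.Embedding.coeFn_mk, Sum.elim_inl, Sum.elim_inr,
    erase_eq_of_notMem hj, Fintype.prod_unique, Fintype.card_coe]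
  rw [Finset.prod_coe_sort s fun a => ∏ i ∈ s.erase a, sin (m * x i), prod_prod_erase_mul_prod,
    prod_pow]
  rcases s.eq_empty_or_nonempty with rfl | hs
  · simp
  obtain ⟨r, hr⟩ : ∃ r, #s = r + 1 := ⟨#s - 1, by have := hs.card_pos; omega⟩
  rw [hr, Nat.add_sub_cancel, ← hP, neg_pow (2 * m ^ 2 * _ * P)]
  ring

end SinSqProd

theorem card_gam {n k : ℕ} (h : k - 1 ≤ n) : #(gam n k) = k - 1 := by
  rw [gam, Fin.card_filter_val_lt, min_eq_right h]

theorem delt_eq_compl (n k : ℕ) : delt n k = (gam n k)ᶜ := by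
  ext i
  simp [gam, delt]

theorem stmt13_general (n k m : ℕ) (hk : 3 ≤ k) (hkn : k ≤ n)
    (j : Fin n) (hj : k - 1 ≤ (j : ℕ))
    (v : Eu n → ℝ)
    (hv : ∀ y : Eu n, v y =
      (∏ i ∈ gam n k, Real.sin (m * y i) ^ 2) * ∏ i ∈ delt n k, y i) :
    ∀ x : Eu n,
      minor (hess v x) (gam n k ∪ {j}) (gam n k ∪ {j}) =
        (-1 : ℝ) ^ (k - 1) * 2 ^ k * (m : ℝ) ^ (2 * k - 2)
          * (∏ i ∈ (delt n k).erase j, x i) ^ k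
          * (∏ i ∈ gam n k, Real.sin (m * x i) ^ 2) ^ (k - 1)
          * (x j) ^ (k - 2)
          * ∑ i ∈ gam n k, Real.cos (m * x i) ^ 2 := by
  intro x
  have hjγ : j ∉ gam n k := by simpa [gam] using hj
  have hvγ : v = sinSqProd (gam n k) m := funext fun y => by rw [hv, sinSqProd, delt_eq_compl]
  obtain ⟨r, rfl⟩ : ∃ r, k = r + 1 := ⟨k - 1, by omega⟩
  rw [hvγ, minor_hess_sinSqProd hjγ, card_gam (by omega), delt_eq_compl, Nat.add_sub_cancel,
    show 2 * (r + 1) - 2 = 2 * r by omega, show r + 1 - 2 = r - 1 by omega]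

theorem stmt13 (n k m : ℕ) (hk : 3 ≤ k) (hkn : k ≤ n) (hm : 1 ≤ m)
    (j : Fin n) (hj : k - 1 ≤ (j : ℕ))
    (v : Eu n → ℝ)
    (hv : ∀ y : Eu n, v y =
      (∏ i ∈ gam n k, Real.sin (m * y i) ^ 2) * ∏ i ∈ delt n k, y i) :
    ∀ x : Eu n,
      minor (hess v x) (gam n k ∪ {j}) (gam n k ∪ {j}) =
        (-1 : ℝ) ^ (k - 1) * 2 ^ k * (m : ℝ) ^ (2 * k - 2)
          * (∏ i ∈ (delt n k).erase j, x i) ^ k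
          * (∏ i ∈ gam n k, Real.sin (m * x i) ^ 2) ^ (k - 1)
          * (x j) ^ (k - 2)
          * ∑ i ∈ gam n k, Real.cos (m * x i) ^ 2 :=
  stmt13_general n k m hk hkn j hj v hv

end
end

section
/- Let k ≥ 2, let h_1, …, h_k : ℝ → ℝ be C² functions, and define H : ℝ^k → ℝ by H(y) = ∏_{i=1}^k h_i(y_i). Let β, ξ ⊂ {1,…,k} be ordered multi-indices of the same length ρ such that |β ∩ ξ| ≤ ρ − 2. Then det( (∂_s ∂_t H)_{s ∈ β, t ∈ ξ} ) = 0 identically on ℝ^k. -/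
open MeasureTheory Filter Topology Finset

noncomputable section

/-! For `s ∉ ξ` and `t ∈ ξ` the entry `∂ₛ∂ₜ H(y)` is the product of
`h_s'(y_s) ∏_{i ∉ ξ, i ≠ s} h_i(y_i)`, which depends only on the row `s`, and
`h_t'(y_t) ∏_{i ∈ ξ, i ≠ t} h_i(y_i)`, which depends only on the column `t`.
Since `|β ∩ ξ| ≤ ρ - 2`, at least two rows of the minor are indexed by `β \ ξ`; they are
proportional, so the determinant vanishes. -/

open Function

namespace Matrix

theorem det_eq_zero_of_rows_eq_smul {n R : Type*} [Fintype n] [DecidableEq n] [CommRing R]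
    (M : Matrix n n R) {a b : n} (hab : a ≠ b) (v : n → R) {ca cb : R}
    (ha : M a = ca • v) (hb : M b = cb • v) : M.det = 0 := by
  have hb' : M = M.updateRow b (cb • v) := by rw [← hb, updateRow_eq_self]
  have ha' : M.updateRow b v = (M.updateRow b v).updateRow a (ca • v) := by
    rw [← ha, ← updateRow_ne (M := M) hab (b := v), updateRow_eq_self]
  rw [hb', det_updateRow_smul, ha', det_updateRow_smul,
    det_zero_of_row_eq hab (by simp [updateRow_ne hab.symm]), mul_zero, mul_zero]

end Matrix

theorem minor_eq_zero_of_apply_eq_mul {N : ℕ} (A : Matrix (Fin N) (Fin N) ℝ)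
    (r c : Finset (Fin N)) (u v : Fin N → ℝ) (hA : ∀ i ∈ r \ c, ∀ j ∈ c, A i j = u i * v j)
    (hrc : 1 < (r \ c).card) : minor A r c = 0 := by
  rw [minor]
  split_ifs with hcard
  · obtain ⟨s₁, hs₁, s₂, hs₂, hne⟩ := one_lt_card.mp hrc
    set e := r.orderIsoOfFin rfl
    refine Matrix.det_eq_zero_of_rows_eq_smul _ (a := e.symm ⟨s₁, (mem_sdiff.1 hs₁).1⟩)
      (b := e.symm ⟨s₂, (mem_sdiff.1 hs₂).1⟩) (by simpa using hne)
      (fun j => v (c.orderIsoOfFin hcard j)) (ca := u s₁) (cb := u s₂) ?_ ?_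
    · funext j; simpa using hA s₁ hs₁ _ (c.orderEmbOfFin_mem hcard j)
    · funext j; simpa using hA s₂ hs₂ _ (c.orderEmbOfFin_mem hcard j)
  · rfl

lemma hasFDerivAt_comp_apply {k : ℕ} {g : ℝ → ℝ} {i : Fin k} {x : Eu k}
    (hg : DifferentiableAt ℝ g (x i)) :
    HasFDerivAt (fun z : Eu k => g (z i)) (deriv g (x i) • EuclideanSpace.proj (𝕜 := ℝ) i) x :=
  hg.hasDerivAt.comp_hasFDerivAt x (EuclideanSpace.proj (𝕜 := ℝ) i).hasFDerivAt

lemma pd_prod_comp_apply {k : ℕ} (g : Fin k → ℝ → ℝ) (hg : ∀ i, Differentiable ℝ (g i))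
    (j : Fin k) :
    pd j (fun z : Eu k => ∏ i, g i (z i)) = fun x => ∏ i, update g j (deriv (g j)) i (x i) := by
  funext x
  rw [pd, (HasFDerivAt.finsetProd fun i _ => hasFDerivAt_comp_apply (hg i (x i))).fderiv,
    ← mul_prod_erase _ _ (mem_univ j)]
  simp only [_root_.sum_apply, smul_apply, PiLp.proj_apply, PiLp.single_apply, smul_eq_mul,
    mul_ite, mul_one, mul_zero, sum_ite_eq', mem_univ, ↓reduceIte, update_self]
  rw [mul_comm]
  congr 1
  exact prod_congr rfl fun i hi => by rw [update_of_ne (ne_of_mem_erase hi)]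

lemma pd2_prod_comp_apply {k : ℕ} (h : Fin k → ℝ → ℝ) (hh : ∀ i, Differentiable ℝ (h i))
    {s t : Fin k} (hst : s ≠ t) (hht : Differentiable ℝ (deriv (h t))) :
    pd2 s t (fun z : Eu k => ∏ i, h i (z i)) =
      fun x => ∏ i, update (update h t (deriv (h t))) s (deriv (h s)) i (x i) := by
  have hh' : ∀ i, Differentiable ℝ (update h t (deriv (h t)) i) := by
    intro i
    rcases eq_or_ne i t with rfl | hit
    · rwa [update_self]
    · rw [update_of_ne hit]; exact hh i
  rw [pd2, pd_prod_comp_apply h hh t, pd_prod_comp_apply _ hh' s, update_of_ne hst]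

lemma pd2_prod_comp_apply_eq_mul {k : ℕ} (h : Fin k → ℝ → ℝ) (hh : ∀ i, Differentiable ℝ (h i))
    {ξ : Finset (Fin k)} {s t : Fin k} (hs : s ∉ ξ) (ht : t ∈ ξ)
    (hht : Differentiable ℝ (deriv (h t))) (y : Eu k) :
    pd2 s t (fun z : Eu k => ∏ i, h i (z i)) y =
      (∏ i ∈ ξᶜ, update h s (deriv (h s)) i (y i)) * ∏ i ∈ ξ, update h t (deriv (h t)) i (y i) := by
  have hst : s ≠ t := (ne_of_mem_of_not_mem ht hs).symm
  rw [pd2_prod_comp_apply h hh hst hht]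
  dsimp only
  rw [← prod_mul_prod_compl ξ, mul_comm]
  congr 1 <;> refine prod_congr rfl fun i hi => ?_
  · rw [update_comm hst.symm, update_of_ne (ne_of_mem_of_not_mem ht (mem_compl.1 hi)).symm]
  · rw [update_of_ne (ne_of_mem_of_not_mem hi hs)]

theorem stmt18_general (k : ℕ)
    (h : Fin k → ℝ → ℝ) (hh : ∀ i, ContDiff ℝ 2 (h i))
    (ρ : ℕ) (β ξ : Finset (Fin k)) (hβ : β.card = ρ) (hξ : ξ.card = ρ)
    (hint : ((β ∩ ξ).card : ℤ) ≤ (ρ : ℤ) - 2) :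
    ∀ y : Eu k, minor (hess (fun z : Eu k => ∏ i, h i (z i)) y) β ξ = 0 := by
  intro y
  have hd : ∀ i, Differentiable ℝ (h i) := fun i => (hh i).differentiable two_ne_zero
  refine minor_eq_zero_of_apply_eq_mul _ β ξ
    (fun s => ∏ i ∈ ξᶜ, update h s (deriv (h s)) i (y i))
    (fun t => ∏ i ∈ ξ, update h t (deriv (h t)) i (y i))
    (fun s hs t ht => pd2_prod_comp_apply_eq_mul h hd (mem_sdiff.1 hs).2 ht
      (hh t).differentiable_deriv_two y) ?_
  have := card_sdiff_add_card_inter β ξ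
  omega

theorem stmt18 (k : ℕ) (hk : 2 ≤ k)
    (h : Fin k → ℝ → ℝ) (hh : ∀ i, ContDiff ℝ 2 (h i))
    (ρ : ℕ) (β ξ : Finset (Fin k)) (hβ : β.card = ρ) (hξ : ξ.card = ρ)
    (hint : ((β ∩ ξ).card : ℤ) ≤ (ρ : ℤ) - 2) :
    ∀ y : Eu k, minor (hess (fun z : Eu k => ∏ i, h i (z i)) y) β ξ = 0 :=
  stmt18_general k h hh ρ β ξ hβ hξ hint

end
end
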